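/- arXiv:0802.1851 — 5 statements merged into one kernel-verified Lean document; each statement's English description precedes it below -/
import Mathlib

section
/- Let n > 1, M > 0, m ∈ (-1/(3n), -M), a = (1+m(2n-1))/(n+1), α ∈ ℝ, δ > 0, and γ with |γ|^{n-1} γ > -a α δ. If f is the maximal solution on [0, η_γ) of (|f''|^{n-1} f'')' + a f f'' + m(1-(f')²) + M(1-f') = 0 with f(0)=α ≥ 0, f'(0)=δ, f''(0)=γ, and if f, f' are positive and f', f'' are bounded on [0, η_γ), then f is unbounded whenever η_γ = ∞; that is, f cannot converge to a finite limit L ∈ (0,∞) as η → ∞. -/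
open Real Set Filter Topology

namespace GSUaux

lemma phi_pos_eq {n x : ℝ} (hn : 1 < n) (hx : 0 < x) : |x| ^ (n-1) * x = x ^ n := by
  calc |x| ^ (n-1) * x = x ^ (n-1) * x ^ (1:ℝ) := by rw [abs_of_pos hx, Real.rpow_one]
    _ = x ^ ((n-1)+1) := (Real.rpow_add hx _ _).symm
    _ = x ^ n := by norm_num

lemma phi_nonpos {n x : ℝ} (hx : x ≤ 0) : |x| ^ (n-1) * x ≤ 0 :=
  mul_nonpos_of_nonneg_of_nonpos (Real.rpow_nonneg (abs_nonneg x) _) hx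

lemma phi_neg_eq {n x : ℝ} (hn : 1 < n) (hx : x < 0) : |x| ^ (n-1) * x = -(|x| ^ n) := by
  have habs : (0:ℝ) < |x| := abs_pos.mpr hx.ne
  have h2 : |x| ^ n = |x| ^ (n-1) * |x| := by
    calc |x| ^ n = |x| ^ ((n-1)+1) := by norm_num
      _ = |x| ^ (n-1) * |x| ^ (1:ℝ) := Real.rpow_add habs _ _
      _ = |x| ^ (n-1) * |x| := by rw [Real.rpow_one]
  rw [h2, abs_of_neg hx]; ring

lemma phi_mono_ge {n D x : ℝ} (hn : 1 < n) (hD : 0 < D) (hx : D ≤ x) :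
    D ^ n ≤ |x| ^ (n-1) * x := by
  rw [phi_pos_eq hn (lt_of_lt_of_le hD hx)]
  exact Real.rpow_le_rpow hD.le hx (by linarith)

lemma phi_lt_of_lt {n D x : ℝ} (hn : 1 < n) (hD : 0 < D) (hx : x < D) :
    |x| ^ (n-1) * x < D ^ n := by
  rcases le_or_gt x 0 with h | h
  · exact lt_of_le_of_lt (phi_nonpos h) (Real.rpow_pos_of_pos hD n)
  · rw [phi_pos_eq hn h]
    exact Real.rpow_lt_rpow h.le hx (by linarith)

lemma lt_of_phi_lt {n D x : ℝ} (hn : 1 < n) (hD : 0 < D) (h : |x| ^ (n-1) * x < D ^ n) :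
    x < D := by
  by_contra hc
  exact absurd h (not_lt.mpr (phi_mono_ge hn hD (not_lt.mp hc)))

lemma pos_of_phi_pos {n x : ℝ} (h : 0 < |x| ^ (n-1) * x) : 0 < x := by
  by_contra hc
  exact absurd h (not_lt.mpr (phi_nonpos (not_lt.mp hc)))

lemma neg_of_phi_neg {n x : ℝ} (h : |x| ^ (n-1) * x < 0) : x < 0 := by
  by_contra hc
  have : 0 ≤ |x| ^ (n-1) * x :=
    mul_nonneg (Real.rpow_nonneg (abs_nonneg x) _) (not_lt.mp hc)
  linarith

lemma phi_abs_le {n C x : ℝ} (hn : 1 < n) (hx : |x| ≤ C) : (|(|x| ^ (n-1) * x)|) ≤ C ^ n := by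
  have hC : 0 ≤ C := (abs_nonneg x).trans hx
  rcases eq_or_ne x 0 with rfl | hne
  · simp only [abs_zero]
    rw [Real.zero_rpow (by linarith : n - 1 ≠ 0), zero_mul, abs_zero]
    exact Real.rpow_nonneg hC n
  · have habs : (0:ℝ) < |x| := abs_pos.mpr hne
    have h1 : |(|x| ^ (n-1) * x)| = |x| ^ (n-1) * |x| := by
      rw [abs_mul, abs_of_nonneg (Real.rpow_nonneg (abs_nonneg x) _)]
    rw [h1]
    calc |x| ^ (n-1) * |x| = |x| ^ (n-1) * |x| ^ (1:ℝ) := by rw [Real.rpow_one]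
      _ = |x| ^ ((n-1)+1) := (Real.rpow_add habs _ _).symm
      _ ≤ C ^ ((n-1)+1) := Real.rpow_le_rpow (abs_nonneg x) hx (by linarith)
      _ = C ^ n := by norm_num

lemma le_rpow_inv_of_phi_le {n c x : ℝ} (hn : 1 < n) (hx : 0 < x) (hc : 0 ≤ c)
    (h : |x| ^ (n-1) * x ≤ c) : x ≤ c ^ n⁻¹ := by
  rw [phi_pos_eq hn hx] at h
  rw [← Real.rpow_rpow_inv hx.le (by linarith : n ≠ 0)]
  exact Real.rpow_le_rpow (Real.rpow_nonneg hx.le n) h (by positivity)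

end GSUaux

namespace GSUaux2

open GSUaux

lemma sub_le_mul_of_deriv_le (F : ℝ → ℝ) {s t B : ℝ} (hst : s ≤ t)
    (hdiff : ∀ τ ∈ Icc s t, DifferentiableAt ℝ F τ)
    (hB : ∀ τ ∈ Ioo s t, deriv F τ ≤ B) : F t - F s ≤ B * (t - s) := by
  have hcont : ContinuousOn F (Icc s t) := fun x hx =>
    ((hdiff x hx).continuousAt).continuousWithinAt
  have hdiffon : DifferentiableOn ℝ F (interior (Icc s t)) := fun x hx => by
    rw [interior_Icc] at hx
    exact (hdiff x (Ioo_subset_Icc_self hx)).differentiableWithinAt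
  have hbd : ∀ x ∈ interior (Icc s t), deriv F x ≤ B := fun x hx => by
    rw [interior_Icc] at hx; exact hB x hx
  exact (convex_Icc s t).image_sub_le_mul_sub_of_deriv_le hcont hdiffon hbd s
    ⟨le_rfl, hst⟩ t ⟨hst, le_rfl⟩ hst

lemma mul_le_sub_of_le_deriv (F : ℝ → ℝ) {s t B : ℝ} (hst : s ≤ t)
    (hdiff : ∀ τ ∈ Icc s t, DifferentiableAt ℝ F τ)
    (hB : ∀ τ ∈ Ioo s t, B ≤ deriv F τ) : B * (t - s) ≤ F t - F s := by
  have hcont : ContinuousOn F (Icc s t) := fun x hx =>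
    ((hdiff x hx).continuousAt).continuousWithinAt
  have hdiffon : DifferentiableOn ℝ F (interior (Icc s t)) := fun x hx => by
    rw [interior_Icc] at hx
    exact (hdiff x (Ioo_subset_Icc_self hx)).differentiableWithinAt
  have hbd : ∀ x ∈ interior (Icc s t), B ≤ deriv F x := fun x hx => by
    rw [interior_Icc] at hx; exact hB x hx
  exact (convex_Icc s t).mul_sub_le_image_sub_of_le_deriv hcont hdiffon hbd s
    ⟨le_rfl, hst⟩ t ⟨hst, le_rfl⟩ hst

lemma tendsto_slope_right {F : ℝ → ℝ} {e d : ℝ} (hd : HasDerivAt F d e) :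
    Tendsto (slope F e) (𝓝[>] e) (𝓝 d) :=
  (hasDerivAt_iff_tendsto_slope.mp hd).mono_left
    (nhdsWithin_mono _ fun _ hx => hx.ne')

lemma tendsto_slope_left {F : ℝ → ℝ} {e d : ℝ} (hd : HasDerivAt F d e) :
    Tendsto (slope F e) (𝓝[<] e) (𝓝 d) :=
  (hasDerivAt_iff_tendsto_slope.mp hd).mono_left
    (nhdsWithin_mono _ fun _ hx => ne_of_lt hx)

lemma deriv_le_right (F : ℝ → ℝ) {e t B : ℝ} (het : e < t)
    (hdiff : ∀ τ ∈ Icc e t, DifferentiableAt ℝ F τ)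
    (hB : ∀ τ ∈ Ioc e t, deriv F τ ≤ B) : deriv F e ≤ B := by
  have hde : HasDerivAt F (deriv F e) e := (hdiff e ⟨le_rfl, het.le⟩).hasDerivAt
  refine le_of_tendsto (tendsto_slope_right hde) ?_
  filter_upwards [Ioc_mem_nhdsGT_of_mem (⟨le_rfl, het⟩ : e ∈ Ico e t)]
    with τ hτ
  have hkey : F τ - F e ≤ B * (τ - e) := by
    refine sub_le_mul_of_deriv_le F hτ.1.le
      (fun x hx => hdiff x ⟨hx.1, hx.2.trans hτ.2⟩) (fun x hx => hB x ⟨hx.1, hx.2.le.trans hτ.2⟩)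
  rw [slope_def_field, div_le_iff₀ (by linarith [hτ.1] : (0:ℝ) < τ - e)]
  linarith

lemma deriv_le_left (F : ℝ → ℝ) {s e B : ℝ} (hse : s < e)
    (hdiff : ∀ τ ∈ Icc s e, DifferentiableAt ℝ F τ)
    (hB : ∀ τ ∈ Ico s e, deriv F τ ≤ B) : deriv F e ≤ B := by
  have hde : HasDerivAt F (deriv F e) e := (hdiff e ⟨hse.le, le_rfl⟩).hasDerivAt
  refine le_of_tendsto (tendsto_slope_left hde) ?_
  filter_upwards [Ico_mem_nhdsLT hse] with τ hτ
  have hkey : F e - F τ ≤ B * (e - τ) := by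
    refine sub_le_mul_of_deriv_le F hτ.2.le
      (fun x hx => hdiff x ⟨le_trans hτ.1 hx.1, hx.2⟩)
      (fun x hx => hB x ⟨le_trans hτ.1 hx.1.le, hx.2⟩)
  rw [slope_def_field, div_le_iff_of_neg (by linarith [hτ.2] : τ - e < 0)]
  linarith

lemma deriv_nonpos_of_right_le {F : ℝ → ℝ} {e t d : ℝ} (het : e < t)
    (hde : HasDerivAt F d e) (hle : ∀ τ ∈ Ioc e t, F τ ≤ F e) : d ≤ 0 := by
  refine le_of_tendsto (tendsto_slope_right hde) ?_
  filter_upwards [Ioc_mem_nhdsGT_of_mem (⟨le_rfl, het⟩ : e ∈ Ico e t)]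
    with τ hτ
  rw [slope_def_field]
  exact div_nonpos_of_nonpos_of_nonneg (by linarith [hle τ hτ]) (by linarith [hτ.1])

end GSUaux2

namespace GSUaux3
open GSUaux GSUaux2

lemma abs_le_rpow_inv {n c x : ℝ} (hn : 1 < n) (hc : 0 ≤ c) (h : |x| ^ n ≤ c) :
    |x| ≤ c ^ n⁻¹ := by
  rw [← Real.rpow_rpow_inv (abs_nonneg x) (by linarith : n ≠ 0)]
  exact Real.rpow_le_rpow (Real.rpow_nonneg (abs_nonneg x) n) h (by positivity)

lemma right_slope_bound (n K ρ : ℝ) (f u : ℝ → ℝ) (η₀ : ℝ) (hn : 1 < n) (hK : 0 < K)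
    (hρ : 0 < ρ)
    (hfu : ∀ τ ∈ Icc η₀ (η₀ + ρ), HasDerivAt f (u τ) τ)
    (hupos : ∀ τ ∈ Icc η₀ (η₀ + ρ), 0 < u τ)
    (hgb : ∀ τ ∈ Ioo η₀ (η₀ + ρ),
      0 < |deriv u τ| ^ (n-1) * deriv u τ ∧
      |deriv u τ| ^ (n-1) * deriv u τ ≤ (2*K) * (τ - η₀)) :
    ∀ τ ∈ Ioo η₀ (η₀+ρ),
      0 ≤ u τ - u η₀ ∧
      u τ - u η₀ ≤ ((2*K) ^ (n⁻¹) * (τ - η₀) ^ (n⁻¹)) * (τ - η₀) := by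
  have hcK : (0:ℝ) ≤ (2*K) ^ (n⁻¹) := Real.rpow_nonneg (by linarith) _
  -- positivity and bound of deriv u on the open interval
  have hpos : ∀ τ ∈ Ioo η₀ (η₀+ρ), 0 < deriv u τ := fun τ hτ =>
    pos_of_phi_pos (hgb τ hτ).1
  have hdiff : ∀ τ ∈ Ioo η₀ (η₀+ρ), DifferentiableAt ℝ u τ := fun τ hτ =>
    differentiableAt_of_deriv_ne_zero (hpos τ hτ).ne'
  have hub : ∀ τ ∈ Ioo η₀ (η₀+ρ), deriv u τ ≤ (2*K) ^ (n⁻¹) * (τ - η₀) ^ (n⁻¹) := by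
    intro τ hτ
    have hτ1 := hτ.1
    have h1 : deriv u τ ≤ ((2*K) * (τ - η₀)) ^ (n⁻¹) :=
      le_rpow_inv_of_phi_le hn (hpos τ hτ)
        (by nlinarith) (hgb τ hτ).2
    rwa [Real.mul_rpow (by linarith) (by linarith : (0:ℝ) ≤ τ - η₀)] at h1
  -- u is strictly monotone on the open interval
  have hmono : StrictMonoOn u (Ioo η₀ (η₀+ρ)) := by
    refine strictMonoOn_of_deriv_pos (convex_Ioo _ _) (fun x hx =>
      ((hdiff x hx).continuousAt).continuousWithinAt) (fun x hx => ?_)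
    rw [interior_Ioo] at hx
    exact hpos x hx
  -- the infimum of u over the interval
  set A := sInf (u '' Ioo η₀ (η₀+ρ)) with hAdef
  have hne : (u '' Ioo η₀ (η₀+ρ)).Nonempty :=
    ⟨u (η₀ + ρ/2), ⟨η₀ + ρ/2, ⟨by linarith, by linarith⟩, rfl⟩⟩
  have hbdd : BddBelow (u '' Ioo η₀ (η₀+ρ)) := by
    refine ⟨0, fun y hy => ?_⟩
    obtain ⟨σ, hσ, rfl⟩ := hy
    exact (hupos σ (Ioo_subset_Icc_self hσ)).le
  have hlb : ∀ τ ∈ Ioo η₀ (η₀+ρ), A ≤ u τ := fun τ hτ =>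
    csInf_le hbdd ⟨τ, hτ, rfl⟩
  -- Lipschitz-type upper bound for u in terms of the infimum
  have hubA : ∀ τ ∈ Ioo η₀ (η₀+ρ),
      u τ ≤ A + ((2*K) ^ (n⁻¹) * (τ - η₀) ^ (n⁻¹)) * (τ - η₀) := by
    intro τ hτ
    set E := ((2*K) ^ (n⁻¹) * (τ - η₀) ^ (n⁻¹)) * (τ - η₀) with hEdef
    have hE0 : 0 ≤ E := by
      have h1 : (0:ℝ) ≤ (τ - η₀) ^ (n⁻¹) := Real.rpow_nonneg (by linarith [hτ.1]) _
      have h2 : (0:ℝ) ≤ τ - η₀ := by linarith [hτ.1]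
      positivity
    by_contra hcon
    push_neg at hcon
    have hlow : ∀ σ ∈ Ioo η₀ (η₀+ρ), u τ - E ≤ u σ := by
      intro σ hσ
      rcases le_or_gt τ σ with hc | hc
      · rcases eq_or_lt_of_le hc with rfl | hc'
        · linarith
        · linarith [hmono hτ hσ hc']
      · -- σ < τ : mean value estimate
        have hkey : u τ - u σ ≤ ((2*K) ^ (n⁻¹) * (τ - η₀) ^ (n⁻¹)) * (τ - σ) := by
          refine sub_le_mul_of_deriv_le u hc.le (fun x hx => hdiff x
            ⟨lt_of_lt_of_le hσ.1 hx.1, lt_of_le_of_lt hx.2 hτ.2⟩) ?_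
          intro x hx
          have hx' : x ∈ Ioo η₀ (η₀+ρ) := ⟨hσ.1.trans hx.1, hx.2.trans hτ.2⟩
          refine (hub x hx').trans ?_
          have : (x - η₀) ^ (n⁻¹) ≤ (τ - η₀) ^ (n⁻¹) :=
            Real.rpow_le_rpow (by linarith [hx'.1]) (by linarith [hx.2]) (by positivity)
          nlinarith
        have h2 : ((2*K) ^ (n⁻¹) * (τ - η₀) ^ (n⁻¹)) * (τ - σ) ≤ E := by
          rw [hEdef]
          have h3 : (0:ℝ) ≤ (2*K) ^ (n⁻¹) * (τ - η₀) ^ (n⁻¹) := by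
            have : (0:ℝ) ≤ (τ - η₀) ^ (n⁻¹) := Real.rpow_nonneg (by linarith [hτ.1]) _
            positivity
          nlinarith [hσ.1]
        linarith
    have : u τ - E ≤ A := by
      refine le_csInf hne (fun y hy => ?_)
      obtain ⟨σ, hσ, rfl⟩ := hy
      exact hlow σ hσ
    linarith
  -- squeeze: A equals u η₀ via slopes of f from the right
  have hAu : A = u η₀ := by
    have hfd : ∀ τ ∈ Icc η₀ (η₀+ρ), DifferentiableAt ℝ f τ := fun τ hτ =>
      (hfu τ hτ).differentiableAt
    have hderiv_eq : ∀ τ ∈ Icc η₀ (η₀+ρ), deriv f τ = u τ := fun τ hτ =>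
      (hfu τ hτ).deriv
    have hslope : ∀ τ ∈ Ioo η₀ (η₀+ρ),
        A ≤ slope f η₀ τ ∧
        slope f η₀ τ ≤ A + ((2*K) ^ (n⁻¹) * (τ - η₀) ^ (n⁻¹)) * (τ - η₀) := by
      intro τ hτ
      have hτpos : (0:ℝ) < τ - η₀ := by linarith [hτ.1]
      have hIccsub : Icc η₀ τ ⊆ Icc η₀ (η₀+ρ) := Icc_subset_Icc le_rfl hτ.2.le
      have hlow2 : A * (τ - η₀) ≤ f τ - f η₀ := by
        refine mul_le_sub_of_le_deriv f hτ.1.le (fun x hx => hfd x (hIccsub hx)) ?_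
        intro x hx
        have hx' : x ∈ Ioo η₀ (η₀+ρ) := ⟨hx.1, hx.2.trans hτ.2⟩
        rw [hderiv_eq x (Ioo_subset_Icc_self hx')]
        exact hlb x hx'
      have hup2 : f τ - f η₀ ≤ (A + ((2*K) ^ (n⁻¹) * (τ - η₀) ^ (n⁻¹)) * (τ - η₀)) * (τ - η₀) := by
        refine sub_le_mul_of_deriv_le f hτ.1.le (fun x hx => hfd x (hIccsub hx)) ?_
        intro x hx
        have hx' : x ∈ Ioo η₀ (η₀+ρ) := ⟨hx.1, hx.2.trans hτ.2⟩
        rw [hderiv_eq x (Ioo_subset_Icc_self hx')]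
        refine (hubA x hx').trans ?_
        have h3 : (x - η₀) ^ (n⁻¹) ≤ (τ - η₀) ^ (n⁻¹) :=
          Real.rpow_le_rpow (by linarith [hx'.1]) (by linarith [hx.2]) (by positivity)
        have h4 : (0:ℝ) ≤ (τ - η₀) ^ (n⁻¹) := Real.rpow_nonneg (by linarith) _
        have h6 : (x - η₀) ^ (n⁻¹) * (x - η₀) ≤ (τ - η₀) ^ (n⁻¹) * (τ - η₀) :=
          mul_le_mul h3 (by linarith [hx.2]) (by linarith [hx'.1]) h4
        nlinarith [hcK]
      constructor
      · rw [slope_def_field, le_div_iff₀ hτpos]; linarith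
      · rw [slope_def_field, div_le_iff₀ hτpos]; nlinarith
    have hT1 : Tendsto (slope f η₀) (𝓝[>] η₀) (𝓝 (u η₀)) :=
      tendsto_slope_right (hfu η₀ ⟨le_rfl, by linarith⟩)
    have hT2 : Tendsto (slope f η₀) (𝓝[>] η₀) (𝓝 A) := by
      have hup : Tendsto (fun τ => A + ((2*K) ^ (n⁻¹) * (τ - η₀) ^ (n⁻¹)) * (τ - η₀))
          (𝓝[>] η₀) (𝓝 A) := by
        have hcont : Tendsto (fun τ => A + ((2*K) ^ (n⁻¹) * (τ - η₀) ^ (n⁻¹)) * (τ - η₀))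
            (𝓝[>] η₀) (𝓝 (A + ((2*K) ^ (n⁻¹) * (0:ℝ) ^ (n⁻¹)) * 0)) := by
          have hc1 : Tendsto (fun τ : ℝ => τ - η₀) (𝓝[>] η₀) (𝓝 0) := by
            have h := (continuous_sub_right η₀).tendsto η₀
            rw [sub_self] at h
            exact h.mono_left nhdsWithin_le_nhds
          have hc2 : Tendsto (fun τ : ℝ => (τ - η₀) ^ (n⁻¹)) (𝓝[>] η₀) (𝓝 ((0:ℝ) ^ (n⁻¹))) := by
            exact
              ((Real.continuousAt_rpow_const 0 (n⁻¹) (Or.inr (by positivity))).tendsto).comp hc1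
          exact tendsto_const_nhds.add ((tendsto_const_nhds.mul hc2).mul hc1)
        rw [Real.zero_rpow (by positivity : n⁻¹ ≠ 0)] at hcont
        simpa using hcont
      refine tendsto_of_tendsto_of_tendsto_of_le_of_le' tendsto_const_nhds hup ?_ ?_
      · filter_upwards [Ioo_mem_nhdsGT_of_mem (⟨le_rfl, by linarith⟩ : η₀ ∈ Ico η₀ (η₀+ρ))]
          with τ hτ
        exact (hslope τ hτ).1
      · filter_upwards [Ioo_mem_nhdsGT_of_mem (⟨le_rfl, by linarith⟩ : η₀ ∈ Ico η₀ (η₀+ρ))]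
          with τ hτ
        exact (hslope τ hτ).2
    exact tendsto_nhds_unique hT2 hT1
  intro τ hτ
  have h1 := hlb τ hτ
  have h2 := hubA τ hτ
  rw [hAu] at h1 h2
  exact ⟨by linarith, by linarith⟩

end GSUaux3

namespace GSUaux4
open GSUaux GSUaux2 GSUaux3

lemma no_bad_point (n : ℝ) (hn : 1 < n) (f u g : ℝ → ℝ) (η₀ K : ℝ) (hη : 0 < η₀)
    (hfu : ∀ η : ℝ, 0 < η → HasDerivAt f (u η) η)
    (hupos : ∀ η : ℝ, 0 < η → 0 < u η)
    (hgdef : ∀ x, g x = |deriv u x| ^ (n - 1) * deriv u x)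
    (hK : 0 < K) (hgK : HasDerivAt g K η₀) (hg0 : g η₀ = 0)
    (hbad : ¬ DifferentiableAt ℝ u η₀) : False := by
  have hcK : (0:ℝ) ≤ (2*K) ^ (n⁻¹) := Real.rpow_nonneg (by linarith) _
  -- window where the slope of g is between K/2 and 2K
  have hs := hasDerivAt_iff_tendsto_slope.mp hgK
  have hev : ∀ᶠ τ in 𝓝[≠] η₀, slope g η₀ τ ∈ Ioo (K/2) (2*K) :=
    hs (Ioo_mem_nhds (by linarith) (by linarith))
  rw [eventually_nhdsWithin_iff] at hev
  obtain ⟨ρ₀, hρ₀, hball⟩ := Metric.eventually_nhds_iff.mp hev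
  set ρ : ℝ := min (ρ₀/2) (η₀/2) with hρdef
  have hρpos : 0 < ρ := lt_min (by linarith) (by linarith)
  have hρη : ρ ≤ η₀/2 := min_le_right _ _
  have hwin : ∀ τ : ℝ, τ ≠ η₀ → |τ - η₀| ≤ ρ →
      K/2 < slope g η₀ τ ∧ slope g η₀ τ < 2*K := by
    intro τ hne hd
    have h1 : dist τ η₀ < ρ₀ := by
      rw [Real.dist_eq]
      have := min_le_left (ρ₀/2) (η₀/2)
      linarith [hd.trans this]
    have := hball h1 hne
    exact ⟨this.1, this.2⟩
  -- value bounds for g on the punctured window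
  have hgval : ∀ τ : ℝ, τ ≠ η₀ → |τ - η₀| ≤ ρ → g τ = slope g η₀ τ * (τ - η₀) := by
    intro τ hne _
    rw [slope_def_field, hg0, sub_zero, div_mul_cancel₀]
    exact sub_ne_zero.mpr hne
  -- right window bounds via right_slope_bound
  have hR : ∀ τ ∈ Ioo η₀ (η₀+ρ),
      0 ≤ u τ - u η₀ ∧ u τ - u η₀ ≤ ((2*K) ^ (n⁻¹) * (τ - η₀) ^ (n⁻¹)) * (τ - η₀) := by
    refine right_slope_bound n K ρ f u η₀ hn hK hρpos
      (fun τ hτ => hfu τ (by rcases hτ with ⟨h1, _⟩; linarith))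
      (fun τ hτ => hupos τ (by rcases hτ with ⟨h1, _⟩; linarith)) ?_
    intro τ hτ
    have hne : τ ≠ η₀ := by rcases hτ with ⟨h1, _⟩; exact ne_of_gt h1
    have hd : |τ - η₀| ≤ ρ := by
      rw [abs_of_pos (by rcases hτ with ⟨h1, _⟩; linarith)]
      rcases hτ with ⟨_, h2⟩; linarith
    have hw := hwin τ hne hd
    have hgv := hgval τ hne hd
    have hτpos : 0 < τ - η₀ := by rcases hτ with ⟨h1, _⟩; linarith
    constructor
    · rw [← hgdef τ, hgv]
      have : 0 < K/2 := by linarith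
      nlinarith [hw.1]
    · rw [← hgdef τ, hgv]
      nlinarith [hw.2]
  -- left window: reflect
  have hL : ∀ σ ∈ Ioo (η₀-ρ) η₀,
      0 ≤ u σ - u η₀ ∧ u σ - u η₀ ≤ ((2*K) ^ (n⁻¹) * (η₀ - σ) ^ (n⁻¹)) * (η₀ - σ) := by
    -- facts on the left window first
    have hgneg : ∀ σ ∈ Ioo (η₀-ρ) η₀, deriv u σ < 0 ∧
        0 < -g σ ∧ -g σ ≤ (2*K) * (η₀ - σ) := by
      intro σ hσ
      have hne : σ ≠ η₀ := ne_of_lt hσ.2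
      have hd : |σ - η₀| ≤ ρ := by
        rw [abs_of_neg (by linarith [hσ.2] : σ - η₀ < 0)]
        linarith [hσ.1]
      have hw := hwin σ hne hd
      have hgv := hgval σ hne hd
      have hσneg : σ - η₀ < 0 := by linarith [hσ.2]
      have hg1 : g σ < 0 := by rw [hgv]; nlinarith [hw.1]
      have hg2 : -g σ ≤ (2*K) * (η₀ - σ) := by rw [hgv]; nlinarith [hw.2]
      refine ⟨?_, by linarith, hg2⟩
      exact neg_of_phi_neg (by rw [← hgdef σ]; exact hg1)
    intro σ hσ
    -- reflected functions
    set F : ℝ → ℝ := fun τ => -f (2*η₀ - τ) with hFdef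
    set U : ℝ → ℝ := fun τ => u (2*η₀ - τ) with hUdef
    have href : ∀ τ ∈ Ioo η₀ (η₀+ρ), (2*η₀ - τ) ∈ Ioo (η₀-ρ) η₀ := by
      intro τ hτ; exact ⟨by linarith [hτ.2], by linarith [hτ.1]⟩
    have hUd : ∀ τ ∈ Ioo η₀ (η₀+ρ), HasDerivAt U (-(deriv u (2*η₀ - τ))) τ := by
      intro τ hτ
      have hσ' := href τ hτ
      have hdu : DifferentiableAt ℝ u (2*η₀ - τ) :=
        differentiableAt_of_deriv_ne_zero (hgneg _ hσ').1.ne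
      have hlin : HasDerivAt (fun τ : ℝ => 2*η₀ - τ) (-1) τ := by
        simpa using (hasDerivAt_id' τ).const_sub (2*η₀)
      have := (hdu.hasDerivAt).comp τ hlin
      simpa [hUdef, Function.comp_def] using this
    have hres := right_slope_bound n K ρ F U η₀ hn hK hρpos ?_ ?_ ?_
    · have hστ : σ = 2*η₀ - (2*η₀ - σ) := by ring
      have hmem : (2*η₀ - σ) ∈ Ioo η₀ (η₀+ρ) := ⟨by linarith [hσ.2], by linarith [hσ.1]⟩
      have := hres (2*η₀ - σ) hmem
      have hU0 : U η₀ = u η₀ := by rw [hUdef]; congr 1; ring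
      have hUσ : U (2*η₀ - σ) = u σ := by rw [hUdef]; congr 1; ring
      rw [hU0, hUσ] at this
      have harg : 2*η₀ - σ - η₀ = η₀ - σ := by ring
      rw [harg] at this
      exact this
    · -- HasDerivAt F (U τ) τ on Icc
      intro τ hτ
      have hpos' : 0 < 2*η₀ - τ := by
        rcases hτ with ⟨h1, h2⟩; linarith
      have hlin : HasDerivAt (fun τ : ℝ => 2*η₀ - τ) (-1) τ := by
        simpa using (hasDerivAt_id' τ).const_sub (2*η₀)
      have hcomp := (hfu (2*η₀ - τ) hpos').comp τ hlin
      have := hcomp.neg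
      rw [show U τ = -(u (2*η₀ - τ) * -1) by simp [hUdef]]
      exact this
    · intro τ hτ
      have hpos' : 0 < 2*η₀ - τ := by
        rcases hτ with ⟨h1, h2⟩; linarith
      exact hupos _ hpos'
    · -- the phi bounds for U
      intro τ hτ
      have hσ' := href τ hτ
      have hg' := hgneg _ hσ'
      have hdUτ : deriv U τ = -(deriv u (2*η₀ - τ)) := (hUd τ hτ).deriv
      have hphi : |deriv U τ| ^ (n-1) * deriv U τ = -(g (2*η₀ - τ)) := by
        rw [hdUτ, abs_neg, hgdef]
        ring
      rw [hphi]
      have harg : τ - η₀ = η₀ - (2*η₀ - τ) := by ring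
      rw [harg]
      exact ⟨hg'.2.1, hg'.2.2⟩
  -- combine into vanishing slope for u at η₀
  have hslope0 : Tendsto (slope u η₀) (𝓝[≠] η₀) (𝓝 0) := by
    have hmaj : Tendsto (fun τ : ℝ => (2*K) ^ (n⁻¹) * |τ - η₀| ^ (n⁻¹)) (𝓝[≠] η₀) (𝓝 0) := by
      have hc1 : Tendsto (fun τ : ℝ => |τ - η₀|) (𝓝[≠] η₀) (𝓝 0) := by
        have h := ((continuous_sub_right η₀).abs.tendsto η₀)
        simp only [sub_self, abs_zero] at h
        exact h.mono_left nhdsWithin_le_nhds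
      have hc2 : Tendsto (fun τ : ℝ => |τ - η₀| ^ (n⁻¹)) (𝓝[≠] η₀) (𝓝 ((0:ℝ) ^ (n⁻¹))) := by
        exact ((Real.continuousAt_rpow_const 0 (n⁻¹) (Or.inr (by positivity))).tendsto).comp hc1
      rw [Real.zero_rpow (by positivity : n⁻¹ ≠ 0)] at hc2
      simpa using tendsto_const_nhds.mul hc2
    refine squeeze_zero_norm' ?_ hmaj
    have hIoo : Ioo (η₀-ρ) (η₀+ρ) ∈ 𝓝 η₀ := Ioo_mem_nhds (by linarith) (by linarith)
    filter_upwards [self_mem_nhdsWithin, mem_nhdsWithin_of_mem_nhds hIoo] with τ hne hIoo'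
    have hτne : τ ≠ η₀ := hne
    rcases lt_or_gt_of_ne hτne with hlt | hgt
    · -- left
      have hmem : τ ∈ Ioo (η₀-ρ) η₀ := ⟨hIoo'.1, hlt⟩
      have h := hL τ hmem
      have habs : |τ - η₀| = η₀ - τ := by rw [abs_of_neg (by linarith)]; ring
      rw [Real.norm_eq_abs, slope_def_field, habs]
      rw [abs_div]
      have hden : |τ - η₀| = η₀ - τ := habs
      rw [hden]
      have hnum : |u τ - u η₀| = u τ - u η₀ := abs_of_nonneg h.1
      rw [hnum, div_le_iff₀ (by linarith : (0:ℝ) < η₀ - τ)]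
      calc u τ - u η₀ ≤ ((2*K) ^ (n⁻¹) * (η₀ - τ) ^ (n⁻¹)) * (η₀ - τ) := h.2
        _ = (2*K) ^ (n⁻¹) * (η₀ - τ) ^ (n⁻¹) * (η₀ - τ) := by ring
    · -- right
      have hmem : τ ∈ Ioo η₀ (η₀+ρ) := ⟨hgt, hIoo'.2⟩
      have h := hR τ hmem
      have habs : |τ - η₀| = τ - η₀ := abs_of_pos (by linarith)
      rw [Real.norm_eq_abs, slope_def_field, abs_div, habs]
      have hnum : |u τ - u η₀| = u τ - u η₀ := abs_of_nonneg h.1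
      rw [hnum, div_le_iff₀ (by linarith : (0:ℝ) < τ - η₀)]
      calc u τ - u η₀ ≤ ((2*K) ^ (n⁻¹) * (τ - η₀) ^ (n⁻¹)) * (τ - η₀) := h.2
        _ = (2*K) ^ (n⁻¹) * (τ - η₀) ^ (n⁻¹) * (τ - η₀) := by ring
  exact hbad (hasDerivAt_iff_tendsto_slope.mpr hslope0).differentiableAt

end GSUaux4
set_option maxHeartbeats 1000000 in
/-- A global positive increasing solution with bounded f', f'' cannot tend to a finite
positive limit. -/
theorem global_solution_unbounded
    (n M m a α δ γ : ℝ) (f : ℝ → ℝ)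
    (hn : 1 < n) (hM : 0 < M) (hm1 : -1 / (3 * n) < m) (hm2 : m < -M)
    (ha : a = (1 + m * (2 * n - 1)) / (n + 1))
    (hα : 0 ≤ α) (hδ : 0 < δ)
    (hγ : |γ| ^ (n - 1) * γ > -a * α * δ)
    (hode : ∀ η ∈ Set.Ioi (0:ℝ),
      deriv (fun x => |deriv (deriv f) x| ^ (n - 1) * deriv (deriv f) x) η
        + a * f η * deriv (deriv f) η
        + m * (1 - (deriv f η) ^ 2) + M * (1 - deriv f η) = 0)
    (h0 : f 0 = α) (h1 : deriv f 0 = δ) (h2 : deriv (deriv f) 0 = γ)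
    (hfpos : ∀ η ∈ Set.Ioi (0:ℝ), 0 < f η)
    (hf'pos : ∀ η ∈ Set.Ioi (0:ℝ), 0 < deriv f η)
    (hf'bdd : ∃ C, ∀ η ∈ Set.Ici (0:ℝ), |deriv f η| ≤ C)
    (hf''bdd : ∃ C, ∀ η ∈ Set.Ici (0:ℝ), |deriv (deriv f) η| ≤ C) :
    ¬ ∃ L : ℝ, 0 < L ∧ Tendsto f atTop (nhds L) := by
  rintro ⟨L, hL, hten⟩
  obtain ⟨C₀, hC₀⟩ := hf''bdd
  -- notation
  set u : ℝ → ℝ := deriv f with hu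
  set w : ℝ → ℝ := deriv u with hw
  set g : ℝ → ℝ := fun x => |w x| ^ (n - 1) * w x with hg
  -- basic facts about f
  have hupos : ∀ η : ℝ, 0 < η → 0 < u η := fun η hη => hf'pos η hη
  have hfd : ∀ η : ℝ, 0 ≤ η → HasDerivAt f (u η) η := by
    intro η hη
    rcases eq_or_lt_of_le hη with rfl | hη'
    · exact (differentiableAt_of_deriv_ne_zero (by rw [← hu, h1]; exact hδ.ne')).hasDerivAt
    · exact (differentiableAt_of_deriv_ne_zero (hupos η hη').ne').hasDerivAt
  have hfmono : MonotoneOn f (Ici (0:ℝ)) := by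
    refine (strictMonoOn_of_deriv_pos (convex_Ici 0) (fun x hx =>
      ((hfd x hx).differentiableAt.continuousAt).continuousWithinAt) ?_).monotoneOn
    intro x hx
    rw [interior_Ici] at hx
    exact hupos x hx
  have hfleL : ∀ x : ℝ, 0 ≤ x → f x ≤ L := by
    intro x hx
    refine ge_of_tendsto hten ?_
    filter_upwards [eventually_ge_atTop x] with y hy
    exact hfmono hx (le_trans hx hy) hy
  -- constants
  have hmneg : m < 0 := by linarith
  have hP : 0 < -(M + m) := by linarith
  set P : ℝ := -(M + m) with hPdef
  have hapos : 0 < a := by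
    rw [ha]
    have h3n : (0:ℝ) < 3 * n := by linarith
    have hm1' : -1 < m * (3 * n) := by
      rw [div_lt_iff₀ h3n] at hm1
      linarith
    have hnum : 0 < 1 + m * (2 * n - 1) := by
      have hmm : m * (3*n) ≤ m * (2*n-1) :=
        mul_le_mul_of_nonpos_left (show (2*n-1:ℝ) ≤ 3*n by linarith) hmneg.le
      linarith only [hmm, hm1']
    positivity
  have hC2 : ∀ η : ℝ, 0 ≤ η → |w η| ≤ max C₀ 1 := fun η hη =>
    (hC₀ η hη).trans (le_max_left _ _)
  set C : ℝ := max C₀ 1 with hCdef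
  have hC1 : (1:ℝ) ≤ C := le_max_right _ _
  have hCpos : (0:ℝ) < C := by linarith
  have hLpos : (0:ℝ) < L := hL
  set ε₁ : ℝ := 1/4 with hε₁
  set ψm : ℝ := 3/4 * P with hψm
  have hψmpos : 0 < ψm := by rw [hψm]; linarith
  set D : ℝ := ψm / (4 * a * L) with hD
  have hDpos : 0 < D := by rw [hD]; positivity
  set G₁ : ℝ := D ^ n with hG₁
  have hG₁pos : 0 < G₁ := Real.rpow_pos_of_pos hDpos n
  set ε : ℝ := 3/4 * ψm with hε
  have hεpos : 0 < ε := by rw [hε]; linarith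
  set Gb : ℝ := C ^ n with hGb
  have hGbpos : 0 < Gb := Real.rpow_pos_of_pos hCpos n
  have hgbd : ∀ η : ℝ, 0 ≤ η → |g η| ≤ Gb := fun η hη =>
    GSUaux.phi_abs_le hn (hC2 η hη)
  set l₁ : ℝ := (2 * Gb + 1) / ε with hl₁
  have hl₁pos : 0 < l₁ := by rw [hl₁]; positivity
  set l₂ : ℝ := l₁ + (ε₁ + 1) / D with hl₂
  have hl₂l₁ : l₁ < l₂ := by
    have h : 0 < (ε₁ + 1)/D := by rw [hε₁]; positivity
    rw [hl₂]; linarith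
  set r₁ : ℝ := ε₁ / (2 * C) with hr₁
  have hr₁pos : 0 < r₁ := by rw [hr₁, hε₁]; positivity
  set Δ : ℝ := ε₁ * r₁ / 4 with hΔ
  have hΔpos : 0 < Δ := by rw [hΔ, hε₁]; positivity
  have hr₁le : r₁ ≤ 1/8 := by
    rw [hr₁, hε₁, div_le_div_iff₀ (by positivity) (by norm_num)]
    linarith only [hC1]
  have hΔε₁ : Δ < ε₁ := by
    have h1 : Δ = ε₁ * r₁ / 4 := hΔ
    have h2 : ε₁ = 1/4 := hε₁
    rw [h2] at h1
    rw [h2]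
    linarith [hr₁le]
  -- the ODE, rearranged
  have hode' : ∀ η : ℝ, 0 < η →
      deriv g η = -(m * (1 - (u η)^2) + M * (1 - u η)) - a * f η * w η := by
    intro η hη
    have := hode η hη
    linarith
  -- pointwise lower bound for the reaction term
  have hψlow : ∀ η : ℝ, 0 < η → u η ≤ ε₁ → ψm ≤ -(m * (1 - (u η)^2) + M * (1 - u η)) := by
    intro η hη hu1
    have hu0 : 0 < u η := hupos η hη
    rw [hε₁] at hu1
    have hp : ψm = 3/4*(-(M+m)) := by rw [hψm, hPdef]
    rw [hp]
    have h3 : u η ^ 2 ≤ u η := by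
      have h := mul_le_mul_of_nonneg_left (show u η ≤ 1 by linarith only [hu1]) hu0.le
      rw [pow_two]
      linarith only [h]
    have h4 : (-m) * (1/4 - u η) ≤ (-m) * (1/4 - u η^2) :=
      mul_le_mul_of_nonneg_left (by linarith only [h3]) (by linarith only [hmneg])
    have h5 : M * (1/4 - u η) ≤ (-m) * (1/4 - u η) :=
      mul_le_mul_of_nonneg_right (by linarith only [hm2]) (by linarith only [hu1])
    linarith only [h4, h5]
  have hψpos1 : ∀ η : ℝ, 0 < η → u η < 1 → 0 < -(m * (1 - (u η)^2) + M * (1 - u η)) := by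
    intro η hη hu1
    have hu0 : 0 < u η := hupos η hη
    have hf1 : 0 < 1 - u η := by linarith only [hu1]
    have hf2 : 0 < -m*(1+ u η) - M := by
      have hmu := mul_pos (show (0:ℝ) < -m by linarith only [hmneg]) hu0
      have hexp : -m*(1+ u η) - M = -m + (-m)*(u η) - M := by ring
      rw [hexp]
      linarith only [hmu, hm2, hM]
    have hprod := mul_pos hf1 hf2
    have hring : (1 - u η)*(-m*(1+ u η) - M) = -(m * (1 - u η ^ 2) + M * (1 - u η)) := by
      ring
    linarith only [hprod, hring]
  -- differentiability of u below level 1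
  have hudiff : ∀ η : ℝ, 0 < η → u η < 1 → DifferentiableAt ℝ u η := by
    intro η hη hu1
    by_contra hbad
    have hw0 : w η = 0 := by rw [hw]; exact deriv_zero_of_not_differentiableAt hbad
    have hg0 : g η = 0 := by
      rw [hg]
      simp only [hw0, abs_zero, mul_zero]
    have hK := hψpos1 η hη hu1
    have hdg : deriv g η = -(m * (1 - (u η)^2) + M * (1 - u η)) := by
      rw [hode' η hη, hw0]
      ring
    have hdiffg : DifferentiableAt ℝ g η :=
      differentiableAt_of_deriv_ne_zero (by rw [hdg]; exact hK.ne')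
    have hgK : HasDerivAt g (-(m * (1 - (u η)^2) + M * (1 - u η))) η := by
      have := hdiffg.hasDerivAt
      rwa [hdg] at this
    exact GSUaux4.no_bad_point n hn f u g η _ hη (fun x hx => hfd x hx.le)
      hupos (fun x => by rw [hg, hw]) hK hgK hg0 hbad
  -- choose T with f T close to L, and a mean-value point ξ with small u
  obtain ⟨T, hT1, hfT⟩ : ∃ T : ℝ, 1 ≤ T ∧ L - Δ < f T := by
    have hev := hten.eventually (eventually_gt_nhds (show L - Δ < L by linarith))
    obtain ⟨T, hT⟩ := (hev.and (eventually_ge_atTop 1)).exists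
    exact ⟨T, hT.2, hT.1⟩
  have hTpos : (0:ℝ) < T := by linarith
  have hincr : ∀ x y : ℝ, T ≤ x → x ≤ y → f y - f x ≤ Δ := by
    intro x y hx hxy
    have h1 : f T ≤ f x := hfmono (mem_Ici.mpr hTpos.le) (mem_Ici.mpr (by linarith)) hx
    have h2 : f y ≤ L := hfleL y (by linarith)
    linarith
  -- the area argument: no point q ≥ T can have u q in (ε₁, 2ε₁]
  have hnoq : ¬ ∃ q : ℝ, T ≤ q ∧ ε₁ < u q ∧ u q ≤ 2*ε₁ := by
    rintro ⟨q, hqT, hq1, hq2⟩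
    have hqpos : 0 < q := lt_of_lt_of_le hTpos hqT
    have hε₁' : ε₁ = 1/4 := hε₁
    have hq2' : u q ≤ 1/2 := by rw [hε₁'] at hq2; linarith
    have hq1' : 1/4 < u q := by rw [hε₁'] at hq1; linarith
    have hCr : C * r₁ = 1/8 := by
      rw [hr₁, hε₁']
      field_simp
      ring
    have hwC : ∀ x : ℝ, 0 ≤ x → deriv u x ≤ C ∧ -C ≤ deriv u x := by
      intro x hx
      have h := hC2 x hx
      rw [hw] at h
      exact ⟨le_of_abs_le h, neg_le_of_abs_le h⟩
    -- Step 1: u stays below 3/4 on [q, q+r₁]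
    have harea1 : ∀ τ ∈ Icc q (q+r₁), u τ < 3/4 := by
      by_contra hE
      push_neg at hE
      obtain ⟨τ₀, hτ₀mem, hτ₀⟩ := hE
      set E : Set ℝ := {τ | τ ∈ Icc q (q+r₁) ∧ 3/4 ≤ u τ} with hEdef
      have hEne : E.Nonempty := ⟨τ₀, hτ₀mem, hτ₀⟩
      have hEbdd : BddBelow E := ⟨q, fun τ hτ => hτ.1.1⟩
      set e := sInf E with he
      have heq : q ≤ e := le_csInf hEne (fun τ hτ => hτ.1.1)
      have heq' : e ≤ q + r₁ := (csInf_le hEbdd ⟨hτ₀mem, hτ₀⟩).trans hτ₀mem.2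
      have happrox : ∀ ι : ℝ, 0 < ι → ∃ τ ∈ E, τ < e + ι := by
        intro ι hι
        exact (csInf_lt_iff hEbdd hEne).mp (by linarith : sInf E < e + ι)
      have hleft : ∀ τ, q ≤ τ → τ < e → u τ < 3/4 := by
        intro τ h1 h2
        by_contra hc
        push_neg at hc
        have hmem : τ ∈ E := ⟨⟨h1, by linarith⟩, hc⟩
        have := csInf_le hEbdd hmem
        linarith
      have hqe : q < e := by
        rcases eq_or_lt_of_le heq with heqq | h
        · exfalso
          have hcont : ContinuousAt u q :=
            (hudiff q hqpos (by linarith)).continuousAt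
          have hev : ∀ᶠ τ in 𝓝 q, u τ < 3/4 :=
            hcont.tendsto.eventually (eventually_lt_nhds (by linarith : u q < 3/4))
          obtain ⟨ι, hι, hball⟩ := Metric.eventually_nhds_iff.mp hev
          obtain ⟨τ, hτE, hτlt⟩ := happrox (ι/2) (by linarith)
          have hd : dist τ q < ι := by
            rw [Real.dist_eq, abs_of_nonneg (by linarith [hτE.1.1] : (0:ℝ) ≤ τ - q)]
            have : τ < q + ι/2 := by linarith [hτlt, le_of_eq heqq, ge_of_eq heqq]
            linarith
          exact absurd hτE.2 (not_le.mpr (hball hd))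
        · exact h
      have hle58 : ∀ τ, q ≤ τ → τ < e → u τ ≤ 5/8 := by
        intro τ h1 h2
        have hkey : u τ - u q ≤ C * (τ - q) := by
          refine GSUaux2.sub_le_mul_of_deriv_le u h1 (fun x hx => hudiff x
            (by linarith [hx.1]) (by linarith [hleft x hx.1 (lt_of_le_of_lt hx.2 h2)])) ?_
          intro x hx
          exact (hwC x (by linarith [hx.1])).1
        have hτr : τ - q ≤ r₁ := by linarith
        have hmul := mul_le_mul_of_nonneg_left hτr hCpos.le
        linarith only [hkey, hmul, hCr, hq2']
      rcases lt_or_ge (u e) 1 with hue | hue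
      · have hepos : 0 < e := by linarith
        have hcont : ContinuousAt u e := (hudiff e hepos hue).continuousAt
        have hge : 3/4 ≤ u e := by
          by_contra hlt
          push_neg at hlt
          have hev : ∀ᶠ τ in 𝓝 e, u τ < 3/4 :=
            hcont.tendsto.eventually (eventually_lt_nhds hlt)
          obtain ⟨ι, hι, hball⟩ := Metric.eventually_nhds_iff.mp hev
          obtain ⟨τ, hτE, hτlt⟩ := happrox ι (by linarith)
          have hτge : e ≤ τ := csInf_le hEbdd hτE
          have hd : dist τ e < ι := by
            rw [Real.dist_eq, abs_of_nonneg (by linarith : (0:ℝ) ≤ τ - e)]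
            linarith
          exact absurd hτE.2 (not_le.mpr (hball hd))
        have hle : u e ≤ 5/8 := by
          by_contra hgt
          push_neg at hgt
          have hev : ∀ᶠ τ in 𝓝 e, 5/8 < u τ :=
            hcont.tendsto.eventually (eventually_gt_nhds hgt)
          obtain ⟨ι, hι, hball⟩ := Metric.eventually_nhds_iff.mp hev
          set τ := max q (e - ι/2) with hτdef
          have hτ1 : q ≤ τ := le_max_left _ _
          have hτ2 : τ < e := max_lt hqe (by linarith)
          have hd : dist τ e < ι := by
            rw [Real.dist_eq, abs_of_nonpos (by linarith : τ - e ≤ 0)]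
            have : e - ι/2 ≤ τ := le_max_right _ _
            linarith
          exact absurd (hball hd) (not_lt.mpr (hle58 τ hτ1 hτ2))
        linarith
      · have hder : deriv f e ≤ 5/8 := by
          refine GSUaux2.deriv_le_left f hqe
            (fun x hx => (hfd x (by linarith [hx.1])).differentiableAt) ?_
          intro x hx
          have h58 := hle58 x hx.1 hx.2
          rw [hu] at h58
          exact h58
        rw [hu] at hue
        linarith
    -- Step 2: u is at least ε₁/2 on [q, q+r₁]
    have harea2 : ∀ τ ∈ Icc q (q+r₁), ε₁/2 ≤ u τ := by
      intro τ hτ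
      have hkey : (-C) * (τ - q) ≤ u τ - u q := by
        refine GSUaux2.mul_le_sub_of_le_deriv u hτ.1 (fun x hx => hudiff x
          (by linarith [hx.1]) (by linarith [harea1 x ⟨hx.1, hx.2.trans hτ.2⟩])) ?_
        intro x hx
        exact (hwC x (by linarith [hx.1])).2
      have hτr : τ - q ≤ r₁ := by linarith [hτ.2]
      have hmul : C * (τ - q) ≤ C * r₁ := mul_le_mul_of_nonneg_left hτr hCpos.le
      rw [hε₁']
      linarith only [hkey, hmul, hCr, hq1']
    -- Step 3: f grows too much
    have hgrow : ε₁/2 * ((q+r₁) - q) ≤ f (q+r₁) - f q := by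
      refine GSUaux2.mul_le_sub_of_le_deriv f (by linarith) (fun x hx =>
        (hfd x (by linarith [hx.1])).differentiableAt) ?_
      intro x hx
      have h := harea2 x (Ioo_subset_Icc_self hx)
      rw [hu] at h
      exact h
    have hq0 : (q+r₁) - q = r₁ := by ring
    rw [hq0] at hgrow
    have hcontra := hincr q (q+r₁) hqT (by linarith)
    have h2Δ : ε₁/2*r₁ = 2*Δ := by rw [hΔ]; ring
    linarith
  have hε₁' : ε₁ = 1/4 := hε₁
  -- mean value point ξ with u ξ small
  obtain ⟨ξ, hξmem, hξval⟩ : ∃ c ∈ Ioo T (T+1), u c = (f (T+1) - f T)/(T+1-T) := by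
    refine exists_hasDerivAt_eq_slope f u (by linarith) ?_ ?_
    · intro x hx
      exact ((hfd x (by linarith [hx.1])).differentiableAt).continuousAt.continuousWithinAt
    · intro x hx
      exact hfd x (by linarith [hx.1])
  have hξT : T < ξ := hξmem.1
  have hξpos : 0 < ξ := hTpos.trans hξT
  have huξ : u ξ ≤ Δ := by
    rw [hξval, show T+1-T = (1:ℝ) by ring, div_one]
    exact hincr T (T+1) le_rfl (by linarith)
  have huξε : u ξ < ε₁ := lt_of_le_of_lt huξ hΔε₁
  -- u stays at or below ε₁ from ξ onwards
  have hsmall : ∀ x : ℝ, ξ ≤ x → u x ≤ ε₁ := by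
    intro x hx
    by_contra hbig
    push_neg at hbig
    have hxξ : ξ < x := by
      rcases eq_or_lt_of_le hx with rfl | h
      · linarith
      · exact h
    set F : Set ℝ := {τ | τ ∈ Icc ξ x ∧ ε₁ < u τ} with hFdef
    have hFne : F.Nonempty := ⟨x, ⟨⟨hx, le_rfl⟩, hbig⟩⟩
    have hFbdd : BddBelow F := ⟨ξ, fun τ hτ => hτ.1.1⟩
    set e := sInf F with he
    have heξ : ξ ≤ e := le_csInf hFne (fun τ hτ => hτ.1.1)
    have hex : e ≤ x := (csInf_le hFbdd ⟨⟨hx, le_rfl⟩, hbig⟩)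
    have happrox : ∀ ι : ℝ, 0 < ι → ∃ τ ∈ F, τ < e + ι := by
      intro ι hι
      exact (csInf_lt_iff hFbdd hFne).mp (by linarith : sInf F < e + ι)
    have hleft : ∀ τ, ξ ≤ τ → τ < e → u τ ≤ ε₁ := by
      intro τ h1 h2
      by_contra hc
      push_neg at hc
      have hmem : τ ∈ F := ⟨⟨h1, by linarith⟩, hc⟩
      have := csInf_le hFbdd hmem
      linarith
    have hξe : ξ < e := by
      rcases eq_or_lt_of_le heξ with heqq | h
      · exfalso
        have hcont : ContinuousAt u ξ :=
          (hudiff ξ hξpos (by rw [hε₁'] at huξε; linarith)).continuousAt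
        have hev : ∀ᶠ τ in 𝓝 ξ, u τ < ε₁ :=
          hcont.tendsto.eventually (eventually_lt_nhds huξε)
        obtain ⟨ι, hι, hball⟩ := Metric.eventually_nhds_iff.mp hev
        obtain ⟨τ, hτF, hτlt⟩ := happrox (ι/2) (by linarith)
        have hd : dist τ ξ < ι := by
          rw [Real.dist_eq, abs_of_nonneg (by linarith [hτF.1.1] : (0:ℝ) ≤ τ - ξ)]
          have : τ < ξ + ι/2 := by rw [heqq]; linarith
          linarith
        exact absurd hτF.2 (not_lt.mpr (hball hd).le)
      · exact h
    rcases lt_or_ge (u e) 1 with hue | hue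
    · have hepos : 0 < e := by linarith
      have hcont : ContinuousAt u e := (hudiff e hepos hue).continuousAt
      have hge : ε₁ ≤ u e := by
        by_contra hlt
        push_neg at hlt
        have hev : ∀ᶠ τ in 𝓝 e, u τ < ε₁ :=
          hcont.tendsto.eventually (eventually_lt_nhds hlt)
        obtain ⟨ι, hι, hball⟩ := Metric.eventually_nhds_iff.mp hev
        obtain ⟨τ, hτF, hτlt⟩ := happrox ι (by linarith)
        have hτge : e ≤ τ := csInf_le hFbdd hτF
        have hd : dist τ e < ι := by
          rw [Real.dist_eq, abs_of_nonneg (by linarith : (0:ℝ) ≤ τ - e)]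
          linarith
        exact absurd hτF.2 (not_lt.mpr (hball hd).le)
      have hle : u e ≤ ε₁ := by
        by_contra hgt
        push_neg at hgt
        have hev : ∀ᶠ τ in 𝓝 e, ε₁ < u τ :=
          hcont.tendsto.eventually (eventually_gt_nhds hgt)
        obtain ⟨ι, hι, hball⟩ := Metric.eventually_nhds_iff.mp hev
        set τ := max ξ (e - ι/2) with hτdef
        have hτ1 : ξ ≤ τ := le_max_left _ _
        have hτ2 : τ < e := max_lt hξe (by linarith)
        have hd : dist τ e < ι := by
          rw [Real.dist_eq, abs_of_nonpos (by linarith : τ - e ≤ 0)]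
          have : e - ι/2 ≤ τ := le_max_right _ _
          linarith
        exact absurd (hleft τ hτ1 hτ2) (not_le.mpr (hball hd))
      -- u e = ε₁ : now find a point with value in (ε₁, 2 ε₁]
      have hev2 : ∀ᶠ τ in 𝓝 e, u τ < 2*ε₁ := by
        refine hcont.tendsto.eventually (eventually_lt_nhds ?_)
        rw [hε₁'] at hge hle ⊢
        linarith
      obtain ⟨ι, hι, hball⟩ := Metric.eventually_nhds_iff.mp hev2
      obtain ⟨τ, hτF, hτlt⟩ := happrox ι (by linarith)
      have hτge : e ≤ τ := csInf_le hFbdd hτF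
      have hd : dist τ e < ι := by
        rw [Real.dist_eq, abs_of_nonneg (by linarith : (0:ℝ) ≤ τ - e)]
        linarith
      exact hnoq ⟨τ, by linarith, hτF.2, (hball hd).le⟩
    · have hder : deriv f e ≤ ε₁ := by
        refine GSUaux2.deriv_le_left f hξe
          (fun y hy => (hfd y (by linarith [hy.1])).differentiableAt) ?_
        intro y hy
        have h' := hleft y hy.1 hy.2
        rw [hu] at h'
        exact h'
      rw [hu] at hue
      rw [hε₁'] at hder
      linarith
  -- zone lemma : below the level G₁ the function g has derivative at least ε
  have hzone : ∀ η : ℝ, 0 < η → u η ≤ ε₁ → g η < G₁ → ε ≤ deriv g η := by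
    intro η hη h1 h2
    have hwD : w η ≤ D := by
      by_contra hc
      push_neg at hc
      have hphi := GSUaux.phi_mono_ge hn hDpos hc.le
      have hgeq : g η = |w η|^(n-1) * w η := by rw [hg]
      rw [hG₁] at h2
      rw [hgeq] at h2
      linarith
    have hψ := hψlow η hη h1
    rw [hode' η hη]
    have hf1 : 0 < f η := hfpos η hη
    have hf2 : f η ≤ L := hfleL η hη.le
    have key : a * f η * w η ≤ a * L * D := by
      have k1 : a * f η * w η ≤ a * f η * D :=
        mul_le_mul_of_nonneg_left hwD (mul_nonneg hapos.le hf1.le)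
      have k2 : (a * D) * f η ≤ (a * D) * L :=
        mul_le_mul_of_nonneg_left hf2 (mul_nonneg hapos.le hDpos.le)
      have k3 : a * f η * D = (a * D) * f η := by ring
      have k4 : a * L * D = (a * D) * L := by ring
      linarith only [k1, k2, k3, k4]
    have hD4 : a * L * D = ψm/4 := by
      rw [hD]
      field_simp
    rw [hε]
    linarith
  -- stall lemma : where the derivative of g is nonpositive, w must be large
  have hstall : ∀ η : ℝ, 0 < η → u η ≤ ε₁ → deriv g η ≤ 0 → 4*D ≤ w η := by
    intro η hη h1 h2
    have hψ := hψlow η hη h1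
    have h3 := hode' η hη
    have hf1 : 0 < f η := hfpos η hη
    have hf2 : f η ≤ L := hfleL η hη.le
    have h4 : ψm ≤ a * f η * w η := by linarith
    have hw0 : 0 < w η := by
      by_contra hcw
      push_neg at hcw
      have hnp : a * f η * w η ≤ 0 :=
        mul_nonpos_of_nonneg_of_nonpos (mul_pos hapos hf1).le hcw
      linarith only [h4, hnp, hψmpos]
    have h7 : ψm ≤ a * L * w η := by
      have k1 : a * f η ≤ a * L := mul_le_mul_of_nonneg_left hf2 hapos.le
      have k2 : (a * f η) * w η ≤ (a * L) * w η :=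
        mul_le_mul_of_nonneg_right k1 hw0.le
      linarith only [h4, k2]
    have h6 : 4*D = ψm/(a*L) := by
      rw [hD]
      field_simp
    rw [h6, div_le_iff₀ (by positivity)]
    linarith
  have hJdiff : ∀ τ : ℝ, ξ ≤ τ → DifferentiableAt ℝ u τ := by
    intro τ hτ
    refine hudiff τ (by linarith) ?_
    have := hsmall τ hτ
    rw [hε₁'] at this
    linarith
  -- step J1 : find a point p in [ξ, ξ+l₁] where g is at least G₁
  have hp : ∃ p ∈ Icc ξ (ξ + l₁), G₁ ≤ g p := by
    by_contra hc
    push_neg at hc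
    have hgrow : ε * (ξ + l₁ - ξ) ≤ g (ξ + l₁) - g ξ := by
      refine GSUaux2.mul_le_sub_of_le_deriv g (by linarith) ?_ ?_
      · intro y hy
        have hε' := hzone y (by linarith [hy.1]) (hsmall y hy.1) (hc y hy)
        exact differentiableAt_of_deriv_ne_zero (by linarith : deriv g y ≠ 0).elim
      · intro y hy
        exact hzone y (by linarith [hy.1]) (hsmall y hy.1.le)
          (hc y (Ioo_subset_Icc_self hy))
    have hb1 := abs_le.mp (hgbd ξ (by linarith))
    have hb2 := abs_le.mp (hgbd (ξ + l₁) (by linarith))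
    have hεl : ε * l₁ = 2*Gb + 1 := by
      rw [hl₁]
      field_simp
    have : ε * (ξ + l₁ - ξ) = ε * l₁ := by ring
    linarith [hb1.1, hb1.2, hb2.1, hb2.2]
  obtain ⟨p, hpmem, hpg⟩ := hp
  have hpξ : ξ ≤ p := hpmem.1
  have hppos : 0 < p := by linarith
  -- step J2 : viability, g stays at or above G₁ on [p, ξ+l₂]
  have hviab : ∀ τ ∈ Icc p (ξ + l₂), G₁ ≤ g τ := by
    by_contra hc
    push_neg at hc
    obtain ⟨τ₀, hτ₀mem, hτ₀⟩ := hc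
    set A : Set ℝ := {τ | τ ∈ Icc p τ₀ ∧ G₁ ≤ g τ} with hA
    have hpτ₀ : p ≤ τ₀ := hτ₀mem.1
    have hAne : A.Nonempty := ⟨p, ⟨⟨le_rfl, hpτ₀⟩, hpg⟩⟩
    have hAbdd : BddAbove A := ⟨τ₀, fun τ hτ => hτ.1.2⟩
    set x := sSup A with hx
    have hx1 : p ≤ x := le_csSup hAbdd ⟨⟨le_rfl, hpτ₀⟩, hpg⟩
    have hx2 : x ≤ τ₀ := csSup_le hAne (fun τ hτ => hτ.1.2)
    have hxpos : 0 < x := by linarith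
    have hxsmall : u x ≤ ε₁ := hsmall x (by linarith)
    have hgt : ∀ τ ∈ Ioc x τ₀, g τ < G₁ := by
      intro τ hτ
      by_contra hcc
      push_neg at hcc
      have hmem : τ ∈ A := ⟨⟨by linarith [hτ.1], hτ.2⟩, hcc⟩
      have := le_csSup hAbdd hmem
      linarith [hτ.1]
    have hgx : G₁ ≤ g x := by
      by_contra hcx
      push_neg at hcx
      have hder := hzone x hxpos hxsmall hcx
      have hdiffg : DifferentiableAt ℝ g x :=
        differentiableAt_of_deriv_ne_zero (by linarith : deriv g x ≠ 0).elim
      have hev : ∀ᶠ τ in 𝓝 x, g τ < G₁ :=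
        hdiffg.continuousAt.tendsto.eventually (eventually_lt_nhds hcx)
      obtain ⟨ι, hι, hball⟩ := Metric.eventually_nhds_iff.mp hev
      obtain ⟨τ, hτA, hτgt⟩ := exists_lt_of_lt_csSup hAne (by linarith : x - ι/2 < sSup A)
      have hτlex : τ ≤ x := le_csSup hAbdd hτA
      have hd : dist τ x < ι := by
        rw [Real.dist_eq, abs_of_nonpos (by linarith : τ - x ≤ 0)]
        linarith
      exact absurd hτA.2 (not_le.mpr (hball hd))
    have hxτ₀ : x < τ₀ := by
      rcases eq_or_lt_of_le hx2 with heq | h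
      · exfalso
        rw [heq] at hgx
        linarith
      · exact h
    have hwx : 4*D ≤ w x := by
      by_cases hdg : DifferentiableAt ℝ g x
      · have hnp : deriv g x ≤ 0 := by
          refine GSUaux2.deriv_nonpos_of_right_le hxτ₀ hdg.hasDerivAt ?_
          intro τ hτ
          linarith [hgt τ hτ]
        exact hstall x hxpos hxsmall hnp
      · have h0 : deriv g x = 0 := deriv_zero_of_not_differentiableAt hdg
        exact hstall x hxpos hxsmall (by rw [h0])
    have hwub : deriv u x ≤ D := by
      refine GSUaux2.deriv_le_right u hxτ₀ ?_ ?_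
      · intro τ hτ
        exact hJdiff τ (by linarith [hτ.1])
      · intro τ hτ
        by_contra hcc
        push_neg at hcc
        have hphi := GSUaux.phi_mono_ge hn hDpos hcc.le
        have hgτ : G₁ ≤ g τ := by
          rw [hG₁, hg, hw]
          exact hphi
        linarith [hgt τ hτ]
    have hwxx : w x ≤ D := by rw [hw]; exact hwub
    linarith
  -- step J3 : u grows beyond ε₁ on [p, ξ+l₂], contradiction
  have hfin : D * (ξ + l₂ - p) ≤ u (ξ + l₂) - u p := by
    refine GSUaux2.mul_le_sub_of_le_deriv u (by linarith [hpmem.2, hl₂l₁]) ?_ ?_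
    · intro τ hτ
      exact hJdiff τ (by linarith [hτ.1])
    · intro τ hτ
      have hv := hviab τ (Ioo_subset_Icc_self hτ)
      by_contra hcc
      push_neg at hcc
      have hphi := GSUaux.phi_lt_of_lt hn hDpos hcc
      have hgτ : g τ < G₁ := by
        rw [hG₁, hg, hw]
        exact hphi
      linarith
  have hup : 0 < u p := hupos p hppos
  have hl₂p : (ε₁ + 1)/D ≤ ξ + l₂ - p := by
    have h1 := hpmem.2
    have h2 : l₂ = l₁ + (ε₁ + 1)/D := hl₂
    linarith
  have hDl : D * ((ε₁+1)/D) = ε₁ + 1 := by field_simp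
  have hfinal : ε₁ + 1 ≤ u (ξ + l₂) - u p := by
    have h1 : D * ((ε₁+1)/D) ≤ D * (ξ + l₂ - p) := mul_le_mul_of_nonneg_left hl₂p hDpos.le
    rw [hDl] at h1
    linarith
  have hlast := hsmall (ξ + l₂) (by linarith [hl₁pos, hl₂l₁])
  linarith
end

section
/- Let n > 1, M > 0, m < 0 with M + m < 0, and suppose f : [0,∞) → ℝ is a global solution of (|f''|^{n-1} f'')' + a f f'' + m(1-(f')²) + M(1-f') = 0 (a = (1+m(2n-1))/(n+1) > 0) such that f' is positive and bounded, f'(η) → l as η → ∞ with l finite, and the first integral identity (11) holds. Then l satisfies m l² + M l - (M+m) = 0, i.e. l = 1 or l = -M/m - 1; if moreover l > 0 is forced together with l being the smaller admissible value, then l = 1. -/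
open Real Set Filter MeasureTheory intervalIntegral

lemma myIntInt {h : ℝ → ℝ} {C : ℝ} (hmeas : Measurable h)
    (hb : ∀ x, 0 ≤ x → |h x| ≤ C) {p q : ℝ} (hp : 0 ≤ p) (hq : 0 ≤ q) :
    IntervalIntegrable h volume p q := by
  rw [intervalIntegrable_iff]
  apply Measure.integrableOn_of_bounded (M := C)
  · exact ((measure_Ioc_lt_top).trans_le le_top).ne
  · exact hmeas.aestronglyMeasurable
  · refine ae_restrict_of_forall_mem measurableSet_uIoc (fun x hx => ?_)
    have : 0 ≤ x := le_trans (le_min hp hq) (le_of_lt hx.1)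
    simpa [Real.norm_eq_abs] using hb x this

lemma myRootGe {n : ℝ} (hn : 1 < n) {y : ℝ} (h : 1 ≤ |y| ^ (n-1) * y) : 1 ≤ y := by
  have hy : 0 < y := by
    by_contra hy
    push_neg at hy
    have : |y| ^ (n-1) * y ≤ 0 :=
      mul_nonpos_iff.mpr (Or.inl ⟨Real.rpow_nonneg (abs_nonneg y) _, hy⟩)
    linarith
  by_contra hlt
  push_neg at hlt
  have h1 : |y| = y := abs_of_pos hy
  have h2 : y ^ (n-1) ≤ 1 := Real.rpow_le_one hy.le hlt.le (by linarith)
  have h3 : |y| ^ (n-1) * y ≤ 1 * y := by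
    rw [h1]
    exact mul_le_mul_of_nonneg_right h2 hy.le
  rw [one_mul] at h3
  linarith

lemma myRootLe {n : ℝ} (hn : 1 < n) {y : ℝ} (h : |y| ^ (n-1) * y ≤ -1) : y ≤ -1 := by
  have : 1 ≤ |(-y)| ^ (n-1) * (-y) := by
    rw [abs_neg]; nlinarith
  have := myRootGe hn this
  linarith

lemma myCesaro {h : ℝ → ℝ} {L C : ℝ} (hmeas : Measurable h)
    (hb : ∀ x, 0 ≤ x → |h x| ≤ C)
    (hl : Tendsto h atTop (nhds L)) :
    Tendsto (fun η => (∫ τ in (0:ℝ)..η, h τ) / η) atTop (nhds L) := by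
  have hC : 0 ≤ C := le_trans (abs_nonneg _) (hb 0 le_rfl)
  rw [Metric.tendsto_atTop]
  intro ε hε
  obtain ⟨A0, hA0⟩ := Metric.tendsto_atTop.mp hl (ε/2) (by positivity)
  set A := max A0 0 with hAdef
  have hA : 0 ≤ A := le_max_right _ _
  set B := (C + 2 * |L|) * A with hBdef
  have hBpos : 0 ≤ B := by positivity
  refine ⟨max (A + 1) (2*B/ε + 1), fun η hη => ?_⟩
  have hη1 : A + 1 ≤ η := le_trans (le_max_left _ _) hη
  have hη2 : 2*B/ε + 1 ≤ η := le_trans (le_max_right _ _) hη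
  have hηpos : 0 < η := by linarith
  have hAη : A ≤ η := by linarith
  have i1 : IntervalIntegrable h volume 0 A := myIntInt hmeas hb le_rfl hA
  have i2 : IntervalIntegrable h volume A η := myIntInt hmeas hb hA hηpos.le
  have key : |(∫ τ in (0:ℝ)..η, h τ) - L * η| ≤ B + ε/2 * η := by
    have split : (∫ τ in (0:ℝ)..η, h τ) = (∫ τ in (0:ℝ)..A, h τ) + ∫ τ in A..η, h τ :=
      (integral_add_adjacent_intervals i1 i2).symm
    have e1 : |∫ τ in (0:ℝ)..A, h τ| ≤ (C + |L|) * A := by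
      have := intervalIntegral.norm_integral_le_of_norm_le_const
        (C := C + |L|) (f := h) (a := (0:ℝ)) (b := A) (fun x hx => ?_)
      · simpa [abs_of_nonneg hA, Real.norm_eq_abs] using this
      · have hx0 : 0 ≤ x := le_trans (by simp [hA]) (le_of_lt hx.1)
        have h1 := hb x hx0
        have h2 := abs_nonneg L
        simp only [Real.norm_eq_abs]
        linarith
    have e2 : |(∫ τ in A..η, h τ) - L * (η - A)| ≤ ε/2 * (η - A) := by
      have hconst : (∫ τ in A..η, (L : ℝ)) = L * (η - A) := by
        simp [mul_comm]
      have := intervalIntegral.norm_integral_le_of_norm_le_const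
        (C := ε/2) (f := fun x => h x - L) (a := A) (b := η) (fun x hx => ?_)
      · rw [intervalIntegral.integral_sub i2 intervalIntegrable_const, hconst] at this
        simpa [Real.norm_eq_abs, abs_of_nonneg (by linarith : (0:ℝ) ≤ η - A)] using this
      · have hx0 : A ≤ x := by
          rcases hx with ⟨h1, _⟩
          simpa [min_eq_left hAη] using h1.le
        have := hA0 x (le_trans (le_max_left _ _) hx0)
        rw [Real.dist_eq] at this
        simpa [Real.norm_eq_abs] using this.le
    have expand : (∫ τ in (0:ℝ)..η, h τ) - L * η
        = (∫ τ in (0:ℝ)..A, h τ) + ((∫ τ in A..η, h τ) - L * (η - A)) + (-(L*A)) := by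
      rw [split]; ring
    rw [expand]
    have t := abs_add_three (∫ τ in (0:ℝ)..A, h τ)
      ((∫ τ in A..η, h τ) - L * (η - A)) (-(L*A))
    rw [abs_neg, abs_mul, abs_of_nonneg hA] at t
    have : ε/2 * (η - A) ≤ ε/2 * η := by nlinarith
    calc |_ + _ + _| ≤ _ := t
      _ ≤ (C + |L|) * A + ε/2 * (η - A) + |L| * A := by gcongr
      _ ≤ B + ε/2 * η := by rw [hBdef]; nlinarith
  rw [Real.dist_eq]
  have heq : (∫ τ in (0:ℝ)..η, h τ) / η - L = ((∫ τ in (0:ℝ)..η, h τ) - L * η) / η := by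
    field_simp
  rw [heq, abs_div, abs_of_pos hηpos, div_lt_iff₀ hηpos]
  have hB2 : 2*B ≤ ε*(η-1) := by
    have h3 : 2*B/ε ≤ η - 1 := by linarith
    rw [div_le_iff₀ hε] at h3
    linarith [mul_comm ε (η-1)]
  calc |(∫ τ in (0:ℝ)..η, h τ) - L * η| ≤ B + ε/2 * η := key
    _ < ε * η := by nlinarith

/-- Identification of the limit of f' at infinity: the limit l must be a root of
m l² + M l - (M+m), namely 1 or -M/m - 1; a positive limit must be 1. -/
theorem limit_identification
    (n M m a l : ℝ) (f : ℝ → ℝ)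
    (hn : 1 < n) (hM : 0 < M) (hm : m < 0) (hMm : M + m < 0)
    (ha : a = (1 + m * (2 * n - 1)) / (n + 1)) (hapos : 0 < a)
    (hode : ∀ η ∈ Set.Ioi (0:ℝ),
      deriv (fun x => |deriv (deriv f) x| ^ (n - 1) * deriv (deriv f) x) η
        + a * f η * deriv (deriv f) η
        + m * (1 - (deriv f η) ^ 2) + M * (1 - deriv f η) = 0)
    (hf'pos : ∀ η ∈ Set.Ici (0:ℝ), 0 < deriv f η)
    (hf'bdd : ∃ C, ∀ η ∈ Set.Ici (0:ℝ), |deriv f η| ≤ C)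
    (hlim : Tendsto (deriv f) atTop (nhds l))
    (hid : ∀ η ∈ Set.Ici (0:ℝ),
      |deriv (deriv f) η| ^ (n - 1) * deriv (deriv f) η
        + a * deriv f η * f η - M * (f η + f 0)
        = |deriv (deriv f) 0| ^ (n - 1) * deriv (deriv f) 0 + a * f 0 * deriv f 0
          - (M + m) * η + (a + m) * ∫ τ in (0:ℝ)..η, (deriv f τ) ^ 2) :
    m * l ^ 2 + M * l - (M + m) = 0 ∧ (l = 1 ∨ l = -M / m - 1) ∧ (0 < l → l = 1) := by
  obtain ⟨C, hC⟩ := hf'bdd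
  have hCb : ∀ x, 0 ≤ x → |deriv f x| ≤ C := fun x hx => hC x hx
  have hC0 : 0 ≤ C := le_trans (abs_nonneg _) (hCb 0 le_rfl)
  have hdf : ∀ x : ℝ, 0 ≤ x → DifferentiableAt ℝ f x := by
    intro x hx
    by_contra hnd
    have h0 := deriv_zero_of_not_differentiableAt hnd
    have := hf'pos x hx
    rw [h0] at this
    exact lt_irrefl _ this
  have hFTC : ∀ η : ℝ, 0 ≤ η → (∫ τ in (0:ℝ)..η, deriv f τ) = f η - f 0 := by
    intro η hη
    refine intervalIntegral.integral_eq_sub_of_hasDerivAt (fun x hx => ?_)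
      (myIntInt (measurable_deriv f) hCb le_rfl hη)
    rw [Set.uIcc_of_le hη] at hx
    exact (hdf x hx.1).hasDerivAt
  -- f η / η → l
  have hQ : Tendsto (fun η => f η / η) atTop (nhds l) := by
    have c1 := myCesaro (measurable_deriv f) hCb hlim
    have c0 : Tendsto (fun η : ℝ => f 0 / η) atTop (nhds 0) :=
      Tendsto.div_atTop tendsto_const_nhds tendsto_id
    have hsum := c0.add c1
    rw [zero_add] at hsum
    refine hsum.congr' ?_
    filter_upwards [eventually_ge_atTop (0:ℝ)] with η hη
    rw [hFTC η hη, ← add_div]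
    ring_nf
  -- integral of f'^2 average → l^2
  have hI : Tendsto (fun η => (∫ τ in (0:ℝ)..η, (deriv f τ)^2) / η) atTop (nhds (l^2)) := by
    refine myCesaro (C := C^2) ((measurable_deriv f).pow_const 2) (fun x hx => ?_) (hlim.pow 2)
    rw [abs_pow]
    exact pow_le_pow_left₀ (abs_nonneg _) (hCb x hx) 2
  set G : ℝ → ℝ := fun η => |deriv (deriv f) η| ^ (n - 1) * deriv (deriv f) η with hGdef
  set Kc : ℝ := G 0 + a * f 0 * deriv f 0 + M * f 0 with hKc
  set r : ℝ := m * l ^ 2 + M * l - (M + m) with hrdef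
  -- G η / η → r
  have hG : Tendsto (fun η => G η / η) atTop (nhds r) := by
    have hT : Tendsto (fun η => Kc/η + M * (f η/η) - a*(deriv f η * (f η/η)) - (M+m)
        + (a+m)*((∫ τ in (0:ℝ)..η, (deriv f τ)^2)/η)) atTop
        (nhds (0 + M*l - a*(l*l) - (M+m) + (a+m)*l^2)) :=
      ((((Tendsto.div_atTop tendsto_const_nhds tendsto_id).add
        (tendsto_const_nhds.mul hQ)).sub (tendsto_const_nhds.mul (hlim.mul hQ))).sub
        tendsto_const_nhds).add (tendsto_const_nhds.mul hI)
    have hval : 0 + M*l - a*(l*l) - (M+m) + (a+m)*l^2 = r := by rw [hrdef]; ring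
    rw [hval] at hT
    refine hT.congr' ?_
    filter_upwards [eventually_gt_atTop (0:ℝ)] with η hη
    have hGeq : G η = Kc - a * deriv f η * f η + M * f η - (M+m)*η
        + (a+m) * ∫ τ in (0:ℝ)..η, (deriv f τ)^2 := by
      have := hid η hη.le
      rw [hKc]
      simp only [hGdef]
      linarith
    rw [hGeq]
    field_simp
    ring
  -- r = 0
  have hr0 : r = 0 := by
    by_contra hr
    rcases (Ne.lt_or_gt hr) with hneg | hpos
    · -- r < 0 : G η ≤ -1 eventually, f'' ≤ -1, f' → -∞
      have h1 : ∀ᶠ η in atTop, G η / η < r/2 := hG.eventually (eventually_lt_nhds (by linarith))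
      have h2 : ∀ᶠ η in atTop, G η ≤ -1 := by
        filter_upwards [h1, eventually_ge_atTop (max (2/(-r)) 1)] with η hη1 hη2
        have hηpos : (0:ℝ) < η := lt_of_lt_of_le one_pos (le_trans (le_max_right _ _) hη2)
        have h2r : 2/(-r) ≤ η := le_trans (le_max_left _ _) hη2
        rw [div_le_iff₀ (by linarith : (0:ℝ) < -r)] at h2r
        have hlt : G η < r/2 * η := (div_lt_iff₀ hηpos).mp hη1
        nlinarith
      obtain ⟨A0, hA0⟩ := eventually_atTop.mp h2
      set A := max A0 0 with hAdef
      have hAnn : (0:ℝ) ≤ A := le_max_right _ _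
      have hf'' : ∀ x, A ≤ x → deriv (deriv f) x ≤ -1 := fun x hx =>
        myRootLe hn (hA0 x (le_trans (le_max_left _ _) hx))
      have hdiff2 : ∀ x, A ≤ x → DifferentiableAt ℝ (deriv f) x := by
        intro x hx
        by_contra hnd
        have h0 := deriv_zero_of_not_differentiableAt hnd
        have := hf'' x hx
        rw [h0] at this
        linarith
      have hv : AntitoneOn (fun x => deriv f x + x) (Ici A) := by
        apply antitoneOn_of_deriv_nonpos (convex_Ici A)
        · exact fun x hx =>
            ((hdiff2 x hx).add differentiable_id.differentiableAt).continuousAt.continuousWithinAt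
        · intro x hx
          rw [interior_Ici] at hx
          exact ((hdiff2 x hx.le).add differentiable_id.differentiableAt).differentiableWithinAt
        · intro x hx
          rw [interior_Ici] at hx
          have hd : HasDerivAt (fun y => deriv f y + y) (deriv (deriv f) x + 1) x :=
            (hdiff2 x hx.le).hasDerivAt.add (hasDerivAt_id x)
          rw [hd.deriv]
          have := hf'' x hx.le
          linarith
      have key := hv (self_mem_Ici) (show A + C + 1 ∈ Ici A by
        simp only [mem_Ici]; linarith) (by linarith)
      simp only at key
      have b1 := abs_le.mp (hC A hAnn)
      have b2 := hf'pos (A + C + 1) (by simp only [mem_Ici]; linarith)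
      linarith
    · -- r > 0 : G η ≥ 1 eventually, f'' ≥ 1, f' → ∞
      have h1 : ∀ᶠ η in atTop, r/2 < G η / η := hG.eventually (eventually_gt_nhds (by linarith))
      have h2 : ∀ᶠ η in atTop, (1:ℝ) ≤ G η := by
        filter_upwards [h1, eventually_ge_atTop (max (2/r) 1)] with η hη1 hη2
        have hηpos : (0:ℝ) < η := lt_of_lt_of_le one_pos (le_trans (le_max_right _ _) hη2)
        have h2r : 2/r ≤ η := le_trans (le_max_left _ _) hη2
        rw [div_le_iff₀ hpos] at h2r
        have hlt : r/2 * η < G η := (lt_div_iff₀ hηpos).mp hη1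
        nlinarith
      obtain ⟨A0, hA0⟩ := eventually_atTop.mp h2
      set A := max A0 0 with hAdef
      have hAnn : (0:ℝ) ≤ A := le_max_right _ _
      have hf'' : ∀ x, A ≤ x → 1 ≤ deriv (deriv f) x := fun x hx =>
        myRootGe hn (hA0 x (le_trans (le_max_left _ _) hx))
      have hdiff2 : ∀ x, A ≤ x → DifferentiableAt ℝ (deriv f) x := by
        intro x hx
        by_contra hnd
        have h0 := deriv_zero_of_not_differentiableAt hnd
        have := hf'' x hx
        rw [h0] at this
        linarith
      have hw : MonotoneOn (fun x => deriv f x - x) (Ici A) := by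
        apply monotoneOn_of_deriv_nonneg (convex_Ici A)
        · exact fun x hx =>
            ((hdiff2 x hx).sub differentiable_id.differentiableAt).continuousAt.continuousWithinAt
        · intro x hx
          rw [interior_Ici] at hx
          exact ((hdiff2 x hx.le).sub differentiable_id.differentiableAt).differentiableWithinAt
        · intro x hx
          rw [interior_Ici] at hx
          have hd : HasDerivAt (fun y => deriv f y - y) (deriv (deriv f) x - 1) x :=
            (hdiff2 x hx.le).hasDerivAt.sub (hasDerivAt_id x)
          rw [hd.deriv]
          have := hf'' x hx.le
          linarith
      have key := hw (self_mem_Ici) (show A + C + 1 ∈ Ici A by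
        simp only [mem_Ici]; linarith) (by linarith)
      simp only at key
      have b1 := abs_le.mp (hC (A + C + 1) (by simp only [mem_Ici]; linarith))
      have b2 := hf'pos A hAnn
      linarith
  rw [hrdef] at hr0
  refine ⟨hr0, ?_, ?_⟩
  · have factor : (l - 1) * (m * l + (M + m)) = 0 := by linear_combination hr0
    rcases mul_eq_zero.mp factor with h | h
    · exact Or.inl (by linarith)
    · refine Or.inr ?_
      have hm' : m ≠ 0 := ne_of_lt hm
      field_simp
      linarith
  · intro hl
    have hneg : -M / m - 1 < 0 := by
      have h1 : 0 < (M + m) / m := div_pos_of_neg_of_neg hMm hm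
      have hm' : m ≠ 0 := ne_of_lt hm
      have h2 : -M / m - 1 = -((M + m) / m) := by field_simp; ring
      linarith
    have factor : (l - 1) * (m * l + (M + m)) = 0 := by linear_combination hr0
    rcases mul_eq_zero.mp factor with h | h
    · linarith
    · exfalso
      have hleq : l = -M/m - 1 := by
        have hm' : m ≠ 0 := ne_of_lt hm
        field_simp
        linarith
      linarith [hleq ▸ hl]
end

section
/- Let n > 1 and let f be a C³ solution (away from zeros of f'') of (|f''|^{n-1} f'')' + a f f'' + m(1-(f')²) + M(1-f') = 0. Define G(η) = f |f''|^{n-1} f'' - (1/2)(f')² |f''|^{n-1} + a f² f' - (M/2) f². Then wherever f'' ≠ 0, G'(η) = -(m+M) f + [2a + m + (n-1)a/(2n)] (f')² f + ((n-1)/(2n)) (f')² (f'')^{-1} [m(1-(f')²) + M(1-f')]. -/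
open Real Set

/-- Derivative formula for the auxiliary function G away from zeros of f''. -/
theorem auxiliary_G_derivative
    (n a m M : ℝ) (f : ℝ → ℝ) (hn : 1 < n) :
    ∀ η : ℝ, ContDiffAt ℝ 3 f η → deriv (deriv f) η ≠ 0 →
      (deriv (fun x => |deriv (deriv f) x| ^ (n - 1) * deriv (deriv f) x) η
        + a * f η * deriv (deriv f) η
        + m * (1 - (deriv f η) ^ 2) + M * (1 - deriv f η) = 0) →
      HasDerivAt
        (fun x => f x * |deriv (deriv f) x| ^ (n - 1) * deriv (deriv f) x
          - (1 / 2) * (deriv f x) ^ 2 * |deriv (deriv f) x| ^ (n - 1)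
          + a * (f x) ^ 2 * deriv f x - (M / 2) * (f x) ^ 2)
        (-(m + M) * f η
          + (2 * a + m + (n - 1) * a / (2 * n)) * (deriv f η) ^ 2 * f η
          + ((n - 1) / (2 * n)) * (deriv f η) ^ 2 * (deriv (deriv f) η)⁻¹
            * (m * (1 - (deriv f η) ^ 2) + M * (1 - deriv f η))) η := by
  intro η hreg hcne heq
  -- differentiability of f, f', f'' at η
  obtain ⟨u, hu, hcu⟩ := hreg.contDiffOn (le_refl 3) (by simp)
  obtain ⟨t, hts, ht, hηt⟩ := mem_nhds_iff.1 hu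
  have hcu3 : ContDiffOn ℝ 3 f t := hcu.mono hts
  have hcd1 : ContDiffOn ℝ 2 (deriv f) t := hcu3.deriv_of_isOpen ht (by norm_num)
  have hcd2 : ContDiffOn ℝ 1 (deriv (deriv f)) t := hcd1.deriv_of_isOpen ht (by norm_num)
  have hd1 : DifferentiableAt ℝ f η := hreg.differentiableAt (by norm_num)
  have hd2 : DifferentiableAt ℝ (deriv f) η :=
    ((hcd1.differentiableOn (by norm_num)).differentiableAt (ht.mem_nhds hηt))
  have hd3 : DifferentiableAt ℝ (deriv (deriv f)) η :=
    ((hcd2.differentiableOn (by norm_num)).differentiableAt (ht.mem_nhds hηt))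
  set F := f η with hFdef
  set P := deriv f η with hPdef
  set c := deriv (deriv f) η with hcdef
  set d := deriv (deriv (deriv f)) η with hddef
  have hF : HasDerivAt f P η := hd1.hasDerivAt
  have hP : HasDerivAt (deriv f) c η := hd2.hasDerivAt
  have hC : HasDerivAt (deriv (deriv f)) d η := hd3.hasDerivAt
  have hn0 : n ≠ 0 := by linarith
  have hc0 : |c| ≠ 0 := abs_ne_zero.2 hcne
  have hcpos : (0:ℝ) < |c| := abs_pos.2 hcne
  -- derivative of x ↦ |f'' x| ^ (n-1)
  have hψ : HasDerivAt (fun x => |deriv (deriv f) x| ^ (n - 1))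
      ((n - 1) * |c| ^ (n - 1) * c⁻¹ * d) η := by
    have h1 : HasDerivAt (fun x => |deriv (deriv f) x|) ((SignType.sign c : ℝ) * d) η :=
      by have := (hasDerivAt_abs hcne).comp η hC; exact this
    have h2 := (Real.hasDerivAt_rpow_const (x := |c|) (p := n - 1) (Or.inl hc0)).comp η h1
    refine h2.congr_deriv (Eq.symm ?_)
    have habs : |c| ^ (n - 1 - 1) * |c| = |c| ^ (n - 1) := by
      rw [← Real.rpow_add_one hc0]; ring_nf
    rcases hcne.lt_or_gt with h | h
    · have : (SignType.sign c : ℝ) = -1 := by simp [sign_neg h]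
      rw [this]
      have : |c| * c⁻¹ = -1 := by rw [abs_of_neg h]; field_simp
      calc (n - 1) * |c| ^ (n - 1) * c⁻¹ * d
          = (n - 1) * (|c| ^ (n - 1 - 1) * (|c| * c⁻¹)) * d := by
            rw [← mul_assoc (|c| ^ (n-1-1)), habs]; ring
        _ = (n - 1) * |c| ^ (n - 1 - 1) * (-1 * d) := by rw [this]; ring
    · have hs : (SignType.sign c : ℝ) = 1 := by simp [sign_pos h]
      rw [hs]
      have hone : |c| * c⁻¹ = 1 := by rw [abs_of_pos h]; field_simp
      calc (n - 1) * |c| ^ (n - 1) * c⁻¹ * d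
          = (n - 1) * (|c| ^ (n - 1 - 1) * (|c| * c⁻¹)) * d := by
            rw [← mul_assoc (|c| ^ (n-1-1)), habs]; ring
        _ = (n - 1) * |c| ^ (n - 1 - 1) * (1 * d) := by rw [hone]; ring
  set S := |c| ^ (n - 1) with hSdef
  -- the ODE in terms of atoms
  have hφ : HasDerivAt (fun x => |deriv (deriv f) x| ^ (n - 1) * deriv (deriv f) x)
      ((n - 1) * S * c⁻¹ * d * c + S * d) η := hψ.mul hC
  have hode : (n - 1) * S * c⁻¹ * d * c + S * d + a * F * c
      + m * (1 - P ^ 2) + M * (1 - P) = 0 := by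
    rw [← hφ.deriv]; linarith [heq]
  have hcc : c⁻¹ * c = 1 := inv_mul_cancel₀ hcne
  have hSd : n * (S * d) = -(a * F * c + m * (1 - P ^ 2) + M * (1 - P)) := by
    linear_combination hode - (n - 1) * S * d * hcc
  -- assemble G' via calculus rules
  have h1 : HasDerivAt (fun x => f x * |deriv (deriv f) x| ^ (n - 1) * deriv (deriv f) x)
      ((P * S + F * ((n - 1) * S * c⁻¹ * d)) * c + F * S * d) η := (hF.mul hψ).mul hC
  have h2 : HasDerivAt (fun x => (1/2 : ℝ) * (deriv f x) ^ 2 * |deriv (deriv f) x| ^ (n - 1))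
      ((1/2 : ℝ) * (2 * P ^ 1 * c) * S + (1/2 : ℝ) * P ^ 2 * ((n - 1) * S * c⁻¹ * d)) η :=
    ((hP.pow 2).const_mul (1/2 : ℝ)).mul hψ
  have h3 : HasDerivAt (fun x => a * (f x) ^ 2 * deriv f x)
      (a * (2 * F ^ 1 * P) * P + a * F ^ 2 * c) η := ((hF.pow 2).const_mul a).mul hP
  have h4 : HasDerivAt (fun x => (M/2 : ℝ) * (f x) ^ 2) ((M/2 : ℝ) * (2 * F ^ 1 * P)) η :=
    (hF.pow 2).const_mul (M/2 : ℝ)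
  have hG := ((h1.sub h2).add h3).sub h4
  refine hG.congr_deriv (Eq.symm ?_)
  field_simp
  linear_combination (-2*F*n*c + (n-1)*P^2) * hSd
end

section
/- Let n > 1, M > 0, m ∈ (-1/(3n), -M), a = (1+m(2n-1))/(n+1), α ≥ 0, δ > 0, and |γ|^{n-1}γ > -a α δ. Suppose f solves the IVP (|f''|^{n-1} f'')' + a f f'' + m(1-(f')²) + M(1-f') = 0, f(0)=α, f'(0)=δ, f''(0)=γ on its maximal interval [0, η_γ), and the first integral identity (11) holds. Then f' > 0 and f > 0 on (0, η_γ). -/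
open Real Set

open Filter Topology

/-- Positivity of f and f' on the maximal interval of existence (Theorem 3.1, step 1). -/
theorem positivity_of_solution
    (n M m a α δ γ ηγ : ℝ) (f : ℝ → ℝ)
    (hn : 1 < n) (hM : 0 < M) (hm1 : -1 / (3 * n) < m) (hm2 : m < -M)
    (ha : a = (1 + m * (2 * n - 1)) / (n + 1))
    (hα : 0 ≤ α) (hδ : 0 < δ)
    (hγ : |γ| ^ (n - 1) * γ > -a * α * δ)
    (hode : ∀ η ∈ Set.Ioo 0 ηγ,
      deriv (fun x => |deriv (deriv f) x| ^ (n - 1) * deriv (deriv f) x) η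
        + a * f η * deriv (deriv f) η
        + m * (1 - (deriv f η) ^ 2) + M * (1 - deriv f η) = 0)
    (h0 : f 0 = α) (h1 : deriv f 0 = δ) (h2 : deriv (deriv f) 0 = γ)
    (hcont : ContinuousOn f (Set.Ico 0 ηγ))
    (hcont' : ContinuousOn (deriv f) (Set.Ico 0 ηγ))
    (hid : ∀ η ∈ Set.Ico 0 ηγ,
      |deriv (deriv f) η| ^ (n - 1) * deriv (deriv f) η
        + a * deriv f η * f η - M * (f η + α)
        = |γ| ^ (n - 1) * γ + a * α * δ - (M + m) * η
          + (a + m) * ∫ τ in (0:ℝ)..η, (deriv f τ) ^ 2) :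
    ∀ η ∈ Set.Ioo 0 ηγ, 0 < deriv f η ∧ 0 < f η := by
  have hn0 : (0:ℝ) < n := lt_trans one_pos hn
  have hn1 : (0:ℝ) < n + 1 := by linarith
  have h3n : (0:ℝ) < 3 * n := by linarith
  have h3nm : -1 < 3 * n * m := by
    have := (div_lt_iff₀ h3n).mp hm1
    linarith [this]
  have ha' : a * (n + 1) = 1 + m * (2 * n - 1) := by
    rw [ha]; field_simp
  have ham : 0 < a + m := by
    nlinarith [ha', h3nm, hn1]
  have hMm : M + m < 0 := by linarith
  have hC : 0 < |γ| ^ (n - 1) * γ + a * α * δ := by linarith [hγ]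
  -- Step 1: f' > 0 on (0, ηγ)
  have key : ∀ η ∈ Set.Ioo 0 ηγ, 0 < deriv f η := by
    by_contra hcon
    push_neg at hcon
    obtain ⟨t, ht, htle⟩ := hcon
    have ht0 : 0 < t := ht.1
    have htI : t < ηγ := ht.2
    set K := Set.Icc (0:ℝ) t ∩ (deriv f) ⁻¹' (Set.Iic 0) with hKdef
    have hKne : K.Nonempty := ⟨t, ⟨ht0.le, le_refl t⟩, htle⟩
    have hKbdd : BddBelow K := ⟨0, fun x hx => hx.1.1⟩
    have hIccsub : Set.Icc (0:ℝ) t ⊆ Set.Ico 0 ηγ :=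
      fun x hx => ⟨hx.1, lt_of_le_of_lt hx.2 htI⟩
    have hc : ContinuousOn (deriv f) (Set.Icc 0 t) := hcont'.mono hIccsub
    have hKclosed : IsClosed K :=
      hc.preimage_isClosed_of_isClosed isClosed_Icc isClosed_Iic
    set η₀ := sInf K with hη₀def
    have hη₀K : η₀ ∈ K := hKclosed.csInf_mem hKne hKbdd
    have hη₀0 : 0 ≤ η₀ := hη₀K.1.1
    have hη₀t : η₀ ≤ t := hη₀K.1.2
    have hη₀le : deriv f η₀ ≤ 0 := hη₀K.2
    have hpos : ∀ x, 0 ≤ x → x < η₀ → 0 < deriv f x := by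
      intro x hx0 hxη
      by_contra hle
      push_neg at hle
      have hxK : x ∈ K := ⟨⟨hx0, le_trans hxη.le hη₀t⟩, hle⟩
      exact absurd (csInf_le hKbdd hxK) (not_le.mpr hxη)
    have hη₀pos : 0 < η₀ := by
      rcases eq_or_lt_of_le hη₀0 with h | h
      · exfalso
        have : deriv f η₀ = δ := by rw [← h, h1]
        linarith
      · exact h
    -- f'(η₀) = 0
    have hf'η₀ : deriv f η₀ = 0 := by
      refine le_antisymm hη₀le ?_
      have hct : ContinuousWithinAt (deriv f) (Set.Icc 0 t) η₀ := hc η₀ ⟨hη₀0, hη₀t⟩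
      have hct' : Filter.Tendsto (deriv f) (𝓝[Set.Ico 0 η₀] η₀) (𝓝 (deriv f η₀)) :=
        hct.mono (fun x hx => ⟨hx.1, le_trans hx.2.le hη₀t⟩)
      have hne : (𝓝[Set.Ico 0 η₀] η₀).NeBot := by
        rw [← mem_closure_iff_nhdsWithin_neBot, closure_Ico (ne_of_lt hη₀pos)]
        exact ⟨hη₀0, le_refl η₀⟩
      refine ge_of_tendsto hct' ?_
      filter_upwards [self_mem_nhdsWithin] with x hx
      exact (hpos x hx.1 hx.2).le
    -- f(η₀) > 0 by strict monotonicity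
    have hfη₀ : 0 < f η₀ := by
      have hmono : StrictMonoOn f (Set.Icc 0 η₀) := by
        refine strictMonoOn_of_deriv_pos (convex_Icc 0 η₀)
          (hcont.mono (fun x hx => ⟨hx.1, lt_of_le_of_lt hx.2 (lt_of_le_of_lt hη₀t htI)⟩)) ?_
        intro x hx
        rw [interior_Icc] at hx
        exact hpos x hx.1.le hx.2
      have := hmono (Set.left_mem_Icc.mpr hη₀0) (Set.right_mem_Icc.mpr hη₀0) hη₀pos
      rw [h0] at this
      linarith
    -- first integral at η₀ gives f''(η₀) > 0
    have hI : 0 ≤ ∫ τ in (0:ℝ)..η₀, (deriv f τ) ^ 2 :=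
      intervalIntegral.integral_nonneg hη₀0 (fun u _ => sq_nonneg _)
    have hid' := hid η₀ ⟨hη₀0, lt_of_le_of_lt hη₀t htI⟩
    rw [hf'η₀] at hid'
    have hφ : 0 < |deriv (deriv f) η₀| ^ (n - 1) * deriv (deriv f) η₀ := by
      have h1' : 0 ≤ (a + m) * ∫ τ in (0:ℝ)..η₀, (deriv f τ) ^ 2 := mul_nonneg ham.le hI
      have h2' : 0 ≤ -((M + m) * η₀) := by
        rw [neg_nonneg]
        exact mul_nonpos_of_nonpos_of_nonneg hMm.le hη₀0
      have h3' : 0 < M * (f η₀ + α) := mul_pos hM (by linarith)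
      nlinarith [hid']
    have hh : 0 < deriv (deriv f) η₀ := by
      by_contra hle
      push_neg at hle
      have : |deriv (deriv f) η₀| ^ (n - 1) * deriv (deriv f) η₀ ≤ 0 :=
        mul_nonpos_of_nonneg_of_nonpos (Real.rpow_nonneg (abs_nonneg _) _) hle
      linarith
    -- slope argument: f' must be negative just left of η₀
    have hdiff : DifferentiableAt ℝ (deriv f) η₀ :=
      differentiableAt_of_deriv_ne_zero (ne_of_gt hh)
    have hder := hdiff.hasDerivAt
    rw [hasDerivAt_iff_tendsto_slope] at hder
    have hslope : ∀ᶠ x in 𝓝[<] η₀, 0 < slope (deriv f) η₀ x := by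
      have h := hder.eventually (lt_mem_nhds hh)
      exact h.filter_mono (nhdsWithin_mono _ (fun x hx => ne_of_lt hx))
    have hmem : ∀ᶠ x in 𝓝[<] η₀, x ∈ Set.Ioo 0 η₀ :=
      Ioo_mem_nhdsLT_of_mem ⟨hη₀pos, le_refl η₀⟩
    obtain ⟨x, hsx, hx⟩ := (hslope.and hmem).exists
    have hxneg : deriv f x < 0 := by
      have hs : slope (deriv f) η₀ x = deriv f x / (x - η₀) := by
        rw [slope_def_field, hf'η₀, sub_zero]
      rw [hs] at hsx
      have hxη : x - η₀ < 0 := by linarith [hx.2]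
      by_contra hge
      push_neg at hge
      have : deriv f x / (x - η₀) ≤ 0 := div_nonpos_of_nonneg_of_nonpos hge hxη.le
      linarith
    exact absurd (hpos x hx.1.le hx.2) (not_lt.mpr hxneg.le)
  -- Step 2: combine
  intro η hη
  refine ⟨key η hη, ?_⟩
  have hmono : StrictMonoOn f (Set.Icc 0 η) := by
    refine strictMonoOn_of_deriv_pos (convex_Icc 0 η)
      (hcont.mono (fun x hx => ⟨hx.1, lt_of_le_of_lt hx.2 hη.2⟩)) ?_
    intro x hx
    rw [interior_Icc] at hx
    exact key x ⟨hx.1, lt_trans hx.2 hη.2⟩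
  have := hmono (Set.left_mem_Icc.mpr hη.1.le) (Set.right_mem_Icc.mpr hη.1.le) hη.1
  rw [h0] at this
  linarith
end

section
/- Let n > 1, M > 0, m ∈ (-1/(3n), -M), and let f be a global positive solution of (|f''|^{n-1} f'')' + a f f'' + m(1-(f')²) + M(1-f') = 0 with a > 0, such that the Lyapunov function V(η) = (1/(n+1))|f''|^{n+1} - (m/3)(f')³ - (M/2)(f')² + (M+m)f' is nonincreasing and f' ≥ 0. Then f' and f'' are bounded on [0,∞): explicitly, (1/(n+1))|f''(η)|^{n+1} ≤ V(0) - (3M+4m)/6 and -(m/3)(f'(η))³ ≤ V(0) + (M/2)(f'(η))² - (M+m)f'(η) for all η, which yields uniform bounds on f' and f''. -/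
open Real Set

lemma cubic_lower (M m x : ℝ) (hM : 0 < M) (hm2 : m < -M) (hx : 0 ≤ x) :
    (3 * M + 4 * m) / 6 ≤ -(m / 3) * x ^ 3 - (M / 2) * x ^ 2 + (M + m) * x := by
  have key : 0 ≤ (x - 1) ^ 2 * ((-m / 3) * x + (-M / 2 - 2 * m / 3)) := by
    apply mul_nonneg (sq_nonneg _)
    nlinarith
  nlinarith [key]

lemma cubic_coercive (c A B D x : ℝ) (hc : 0 < c) (hA : 0 ≤ A) (hB : 0 ≤ B)
    (hD : 0 ≤ D) (hx : 0 ≤ x) (h : c * x ^ 3 ≤ A + B * x ^ 2 + D * x) :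
    x ≤ 1 + (A + B + D) / c := by
  by_contra hcon
  push_neg at hcon
  have h0 : 0 ≤ (A + B + D) / c := by positivity
  have h1 : 1 ≤ x := by linarith
  have h2 : A + B + D < c * (x - 1) := by
    have := (div_lt_iff₀ hc).mp (by linarith : (A + B + D) / c < x - 1)
    linarith
  nlinarith [mul_nonneg hA (sq_nonneg x), sq_nonneg x, mul_nonneg hD hx,
    mul_nonneg (mul_nonneg hD hx) hx]

/-- Boundedness of f' and f'' obtained from monotonicity of the Lyapunov function. -/
theorem boundedness_from_lyapunov
    (n M m a : ℝ) (f : ℝ → ℝ)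
    (hn : 1 < n) (hM : 0 < M) (hm1 : -1 / (3 * n) < m) (hm2 : m < -M)
    (ha : 0 < a)
    (hfpos : ∀ η ∈ Set.Ici (0:ℝ), 0 < f η)
    (hf'nonneg : ∀ η ∈ Set.Ici (0:ℝ), 0 ≤ deriv f η)
    (hode : ∀ η ∈ Set.Ioi (0:ℝ),
      deriv (fun x => |deriv (deriv f) x| ^ (n - 1) * deriv (deriv f) x) η
        + a * f η * deriv (deriv f) η
        + m * (1 - (deriv f η) ^ 2) + M * (1 - deriv f η) = 0)
    (hV : AntitoneOn
      (fun x => (1 / (n + 1)) * |deriv (deriv f) x| ^ (n + 1)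
        - (m / 3) * (deriv f x) ^ 3 - (M / 2) * (deriv f x) ^ 2
        + (M + m) * deriv f x) (Set.Ici 0)) :
    (∀ η ∈ Set.Ici (0:ℝ),
      (1 / (n + 1)) * |deriv (deriv f) η| ^ (n + 1)
        ≤ ((1 / (n + 1)) * |deriv (deriv f) 0| ^ (n + 1)
            - (m / 3) * (deriv f 0) ^ 3 - (M / 2) * (deriv f 0) ^ 2
            + (M + m) * deriv f 0) - (3 * M + 4 * m) / 6 ∧
      -(m / 3) * (deriv f η) ^ 3
        ≤ ((1 / (n + 1)) * |deriv (deriv f) 0| ^ (n + 1)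
            - (m / 3) * (deriv f 0) ^ 3 - (M / 2) * (deriv f 0) ^ 2
            + (M + m) * deriv f 0)
          + (M / 2) * (deriv f η) ^ 2 - (M + m) * deriv f η) ∧
    (∃ C : ℝ, ∀ η ∈ Set.Ici (0:ℝ), |deriv f η| ≤ C ∧ |deriv (deriv f) η| ≤ C) := by
  have hn1 : (0:ℝ) < n + 1 := by linarith
  set V0 : ℝ := (1 / (n + 1)) * |deriv (deriv f) 0| ^ (n + 1)
      - (m / 3) * (deriv f 0) ^ 3 - (M / 2) * (deriv f 0) ^ 2
      + (M + m) * deriv f 0 with hV0def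
  have hVle : ∀ η ∈ Set.Ici (0:ℝ),
      (1 / (n + 1)) * |deriv (deriv f) η| ^ (n + 1)
        - (m / 3) * (deriv f η) ^ 3 - (M / 2) * (deriv f η) ^ 2
        + (M + m) * deriv f η ≤ V0 := by
    intro η hη
    exact hV (self_mem_Ici) hη hη
  have habs : ∀ η : ℝ, 0 ≤ (1 / (n + 1)) * |deriv (deriv f) η| ^ (n + 1) := by
    intro η
    apply mul_nonneg (by positivity)
    exact Real.rpow_nonneg (abs_nonneg _) _
  have part1 : ∀ η ∈ Set.Ici (0:ℝ),
      (1 / (n + 1)) * |deriv (deriv f) η| ^ (n + 1) ≤ V0 - (3 * M + 4 * m) / 6 ∧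
      -(m / 3) * (deriv f η) ^ 3
        ≤ V0 + (M / 2) * (deriv f η) ^ 2 - (M + m) * deriv f η := by
    intro η hη
    have hx := hf'nonneg η hη
    have hcub := cubic_lower M m (deriv f η) hM hm2 hx
    have hVl := hVle η hη
    constructor
    · linarith
    · have := habs η; linarith
  refine ⟨part1, ?_⟩
  -- bound on f''
  set K : ℝ := V0 - (3 * M + 4 * m) / 6 with hKdef
  have hK0 : 0 ≤ K := le_trans (habs 0) ((part1 0 self_mem_Ici).1)
  clear_value V0 K
  have hf''bd : ∀ η ∈ Set.Ici (0:ℝ), |deriv (deriv f) η| ≤ max 1 ((n + 1) * K) := by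
    intro η hη
    set y := |deriv (deriv f) η| with hy
    rcases le_or_gt y 1 with h | h
    · exact le_trans h (le_max_left _ _)
    · have hyp : y ^ (n + 1) ≤ (n + 1) * K := by
        have h3 := (part1 η hη).1
        have h5 : y ^ (n + 1) = (n + 1) * ((1 / (n + 1)) * y ^ (n + 1)) := by
          field_simp
        rw [h5]
        exact mul_le_mul_of_nonneg_left h3 hn1.le
      have hy1 : y ≤ y ^ (n + 1) := by
        calc y = y ^ (1:ℝ) := (Real.rpow_one y).symm
        _ ≤ y ^ (n + 1) := Real.rpow_le_rpow_of_exponent_le h.le (by linarith)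
      exact le_trans (le_trans hy1 hyp) (le_max_right _ _)
  -- bound on f'
  have hc : 0 < -m / 3 := by linarith
  have hf'bd : ∀ η ∈ Set.Ici (0:ℝ),
      deriv f η ≤ 1 + (max V0 0 + M / 2 + -(M + m)) / (-m / 3) := by
    intro η hη
    have hx := hf'nonneg η hη
    apply cubic_coercive (-m / 3) (max V0 0) (M / 2) (-(M + m)) (deriv f η) hc
      (le_max_right _ _) (by positivity) (by linarith) hx
    have h2 := (part1 η hη).2
    have hVA : V0 ≤ max V0 0 := le_max_left _ _
    linarith [h2, hVA, hm2.le, hM.le]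
  refine ⟨max (1 + (max V0 0 + M / 2 + -(M + m)) / (-m / 3)) (max 1 ((n + 1) * K)), ?_⟩
  intro η hη
  constructor
  · rw [abs_of_nonneg (hf'nonneg η hη)]
    exact le_trans (hf'bd η hη) (le_max_left _ _)
  · exact le_trans (hf''bd η hη) (le_max_right _ _)
end
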